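/- arXiv:2509.00436 — 5 statements merged into one kernel-verified Lean document; each statement's English description precedes it below -/
import Mathlib

section
/- For every integer n ≥ 0, the number of u-parking distributions of length n equals the n-th m-Fuss–Catalan number, i.e. |PK(n)| = (1/(mn+1))·C(mn+n, n). -/
open scoped Classical
open Finset

noncomputable section

/-- The set of positive nondecreasing sequences of length `n` bounded above by `b` is finite. -/
lemma boundedSeq_finite (n : ℕ) (b : ℕ → ℕ) :
    {p : Fin n → ℕ | Monotone p ∧ ∀ i : Fin n, 1 ≤ p i ∧ p i ≤ b i}.Finite := by
  have h : {p : Fin n → ℕ | Monotone p ∧ ∀ i : Fin n, 1 ≤ p i ∧ p i ≤ b i} ⊆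
      Set.pi Set.univ (fun i : Fin n => Set.Iic (b i)) := by
    intro p hp
    rw [Set.mem_pi]
    intro i _
    exact (hp.2 i).2
  exact (Set.Finite.pi fun i : Fin n => Set.finite_Iic (b (i : ℕ))).subset h

/-- The finset of nondecreasing sequences `p : Fin n → ℕ` of positive integers
with `p i ≤ b i` for all `i`. -/
def BSeq (n : ℕ) (b : ℕ → ℕ) : Finset (Fin n → ℕ) := (boundedSeq_finite n b).toFinset

/-- `PK m n` : the u-parking distributions of length `n`, i.e. nondecreasing sequences
of positive integers with `p i ≤ m*(i-1)+1` (here indexed from `0`, so `p i ≤ m*i+1`). -/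
def PK (m n : ℕ) : Finset (Fin n → ℕ) := BSeq n (fun i => m * i + 1)

/-- `luck p` : the number of indices `i` with `p i = m*(i-1)+1` (0-indexed: `m*i+1`). -/
def luck (m : ℕ) {n : ℕ} (p : Fin n → ℕ) : ℕ :=
  (Finset.univ.filter (fun i : Fin n => p i = m * (i : ℕ) + 1)).card

/-- `freq j p` = `ω_j(p)` : the number of indices `i` with `p i = j`. -/
def freq (j : ℕ) {n : ℕ} (p : Fin n → ℕ) : ℕ :=
  (Finset.univ.filter (fun i : Fin n => p i = j)).card

/-- `hcnt m n k r` = `h_{n,k,r}` : the number of nondecreasing sequences of positive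
integers with `p_i ≤ m*(i+k-1) - r` for `1 ≤ i ≤ n` (0-indexed: `p i ≤ m*(i+k) - r`). -/
def hcnt (m n k r : ℕ) : ℕ := (BSeq n (fun i => m * (i + k) - r)).card

/-- `Cnt m n k` = `C_{n,k}` : the number of `p ∈ PK m n` with `luck p = k`. -/
def Cnt (m n k : ℕ) : ℕ := ((PK m n).filter (fun p => luck m p = k)).card

/-- `Rpoly m n` = `R_n(q) = Σ_k C_{n,k} q^k ∈ ℤ[q]`. -/
def Rpoly (m n : ℕ) : Polynomial ℤ :=
  ∑ k ∈ Finset.range (n + 1), (Cnt m n k : Polynomial ℤ) * Polynomial.X ^ k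

/-- `hfull t k` : the complete homogeneous symmetric polynomial of degree `k`
in variables `q_0, …, q_{t-1}`, i.e. the sum of all monomials of total degree `k`. -/
def hfull (t k : ℕ) : MvPolynomial (Fin t) ℤ :=
  ∑ α ∈ Finset.Nat.antidiagonalTuple t k, ∏ i : Fin t, MvPolynomial.X i ^ α i

/-- `ffix m p ℓ` = `i_ℓ(p)` : the first fixed point of type `ℓ`, the smallest `k` with
`2 ≤ k ≤ n` and `p_k ≥ m*(k-2)+1+ℓ` (1-indexed), or `n+1` if there is none. -/
def ffix (m : ℕ) {n : ℕ} (p : Fin n → ℕ) (ℓ : ℕ) : ℕ :=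
  sInf ({k | 2 ≤ k ∧ ∃ i : Fin n, (i : ℕ) + 1 = k ∧ m * (k - 2) + 1 + ℓ ≤ p i} ∪ {n + 1})

/-- The extended first fixed points: `i_0 = 2`, `i_{m+1} = n+1`, and `i_ℓ = ffix m p ℓ`
for `1 ≤ ℓ ≤ m`. -/
def ffixE (m : ℕ) {n : ℕ} (p : Fin n → ℕ) (j : ℕ) : ℕ :=
  if j = 0 then 2 else if j = m + 1 then n + 1 else ffix m p j

/-- `pget p k` = `p_k` (1-indexed), `0` out of range. -/
def pget {n : ℕ} (p : Fin n → ℕ) (k : ℕ) : ℕ := if h : k - 1 < n then p ⟨k - 1, h⟩ else 0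

/-- The `(ℓ+1)`-st part `P_{ℓ+1}` (for `0 ≤ ℓ ≤ m`) of the first-return decomposition of `p`:
the list `(p_k - (p_{i_ℓ} - 1))` for `i_ℓ ≤ k ≤ i_{ℓ+1} - 1`. -/
def FRD (m : ℕ) {n : ℕ} (p : Fin n → ℕ) (ℓ : ℕ) : List ℕ :=
  (List.range (ffixE m p (ℓ + 1) - ffixE m p ℓ)).map
    (fun t => pget p (ffixE m p ℓ + t) - (pget p (ffixE m p ℓ) - 1))

/-- A list is a u-parking distribution: nondecreasing, with `l.get i ∈ [1, m*i+1]`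
(0-indexed). -/
def isPKlist (m : ℕ) (l : List ℕ) : Prop :=
  l.Pairwise (· ≤ ·) ∧ ∀ i : Fin l.length, 1 ≤ l.get i ∧ l.get i ≤ m * (i : ℕ) + 1

/-- `θ(p)` : the nondecreasing rearrangement of the concatenation of `p` with the list of
all `j ∈ {1, …, m*n-m+1}` with `j ≢ 1 (mod m)`. -/
def theta (m n : ℕ) (p : Fin n → ℕ) : List ℕ :=
  Multiset.sort
    ((List.ofFn p : Multiset ℕ) +
      (((List.range (m * n - m + 1)).map (· + 1)).filter
        (fun j => ¬ j ≡ 1 [MOD m]) : List ℕ)) (· ≤ ·)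

/-- Parking distributions on the `m`-caterpillar of length `n`, as nondecreasing lists. -/
def PKcat (m n : ℕ) : Set (List ℕ) :=
  {a | a.length = m * n - m + 1 ∧ a.Pairwise (· ≤ ·) ∧
       (∀ x ∈ a, 1 ≤ x ∧ x ≤ m * n - m + 1) ∧
       (∀ i : ℕ, 1 ≤ i → i ≤ n →
         m * (i - 1) + 1 ≤ (a.filter (fun x => x ≤ m * (i - 1) + 1)).length) ∧
       (∀ j : ℕ, 1 ≤ j → j ≤ m * n - m + 1 → ¬ j ≡ 1 [MOD m] → j ∈ a)}

/-!
Encode `p ∈ PK m n` as the multiset `{p i - 1}` of `n` points of `ℤ/(mn+1)`. The parking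
condition says that every initial segment `[0, t)` with `t ≤ mn` contains at least `t / m` of
the points, i.e. the walk `t ↦ t - m · #(points in [0, t))` never rises above its starting
value within one period. Over a full period the walk gains exactly `mn + 1 - mn = 1`, so by the
cycle lemma exactly one of the `mn + 1` rotations of any `n`-multiset satisfies the condition.
Hence `(mn + 1) · |PK m n|` is the number of `n`-multisets on `mn + 1` points, `C(mn + n, n)`.
-/

theorem cycle_lemma {N : ℕ} {f : ℕ → ℤ} (hf : ∀ t, f (t + N) = f t + 1) :
    ∃! r, r < N ∧ ∀ t < N, f (r + t) ≤ f r := by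
  have hN : 0 < N := Nat.pos_of_ne_zero fun h => by simpa [h] using hf 0
  have hmax : ∃ r, r < N ∧ ∀ t < N, f t ≤ f r := by
    obtain ⟨r, hr, hle⟩ := (range N).exists_max_image f (nonempty_range_iff.2 hN.ne')
    exact ⟨r, mem_range.1 hr, fun t ht => hle t (mem_range.2 ht)⟩
  set r₀ := Nat.find hmax
  obtain ⟨hr₀, hle⟩ : r₀ < N ∧ ∀ t < N, f t ≤ f r₀ := Nat.find_spec hmax
  -- the least maximiser beats all earlier values strictly, hence also their translates by `N`
  have hlt : ∀ t < r₀, f t < f r₀ := fun t ht =>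
    not_le.1 fun h => Nat.find_min hmax ht ⟨ht.trans hr₀, fun u hu => (hle u hu).trans h⟩
  have hdom₀ : ∀ t < N, f (r₀ + t) ≤ f r₀ := fun t ht => by
    rcases lt_or_ge (r₀ + t) N with h | h
    · exact hle _ h
    · have := hf (r₀ + t - N)
      rw [Nat.sub_add_cancel h] at this
      linarith [hlt (r₀ + t - N) (by omega)]
  have hne : ∀ a b, a < b → b < N → (∀ t < N, f (a + t) ≤ f a) →
      ¬ ∀ t < N, f (b + t) ≤ f b := fun a b hab hb ha hb' => by
    have h₁ := ha (b - a) (by omega)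
    have h₂ := hb' (N - (b - a)) (by omega)
    rw [Nat.add_sub_cancel' hab.le] at h₁
    rw [show b + (N - (b - a)) = a + N by omega, hf] at h₂
    linarith
  refine ⟨r₀, ⟨hr₀, hdom₀⟩, fun r ⟨hr, hdom⟩ => ?_⟩
  rcases lt_trichotomy r r₀ with h | h | h
  · exact absurd hdom₀ (hne r r₀ h hr₀ hdom)
  · exact h
  · exact absurd hdom (hne r₀ r h hr hdom₀)

theorem card_mul_card_filter_eq_card {G X : Type*} [Fintype G] [Fintype X]
    (σ : G → X ≃ X) (P : X → Prop) (h : ∀ x, ∃! g, P (σ g x)) :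
    Fintype.card G * #{x | P x} = Fintype.card X := by
  calc Fintype.card G * #{x | P x} = ∑ g : G, #{x | P (σ g x)} := by
        rw [sum_congr rfl fun g _ => card_equiv (σ g) (t := {x | P x}) fun x => by simp,
          sum_const, smul_eq_mul, card_univ]
    _ = ∑ x : X, #{g | P (σ g x)} := by simp only [card_filter]; exact sum_comm
    _ = Fintype.card X := by simp [(Fintype.existsUnique_iff_card_one _).1 (h _)]

section PrefixCount

variable {N : ℕ}

def prefixCount (s : Multiset (ZMod N)) (t : ℕ) : ℕ := ∑ j ∈ range t, s.count (j : ZMod N)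

lemma prefixCount_add (s : Multiset (ZMod N)) (a t : ℕ) :
    prefixCount s (a + t) = prefixCount s a + prefixCount (s.map (· - (a : ZMod N))) t := by
  unfold prefixCount
  rw [sum_range_add]
  congr 1
  refine sum_congr rfl fun j _ => ?_
  rw [← Multiset.count_map_eq_count' (· - (a : ZMod N)) s sub_left_injective]
  simp

variable [NeZero N]

lemma prefixCount_self (s : Multiset (ZMod N)) : prefixCount s N = Multiset.card s := by
  rw [← Multiset.sum_count_eq_card (s := univ) fun _ _ => mem_univ _, prefixCount]
  exact sum_nbij' (↑) ZMod.val (by simp) (by simp [ZMod.val_lt])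
    (fun j hj => ZMod.val_cast_of_lt (mem_range.1 hj)) (by simp) (by simp)

lemma prefixCount_eq_card_filter (s : Multiset (ZMod N)) {t : ℕ} (ht : t ≤ N) :
    prefixCount s t = Multiset.card (s.filter fun x => x.val < t) := by
  induction t with
  | zero => simp [prefixCount]
  | succ t ih =>
    rw [prefixCount, sum_range_succ, ← prefixCount, ih (by omega),
      Multiset.count_eq_card_filter_eq, ← Multiset.card_add, ← Multiset.filter_add_not (fun x : ZMod N => x.val < t)
        (s.filter fun x => x.val < t + 1), Multiset.filter_filter, Multiset.filter_filter]
    congr 2 <;> refine Multiset.filter_congr fun x _ => ?_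
    · omega
    · have : (t : ZMod N) = x ↔ x.val = t :=
        ⟨by rintro rfl; exact ZMod.val_cast_of_lt (by omega), by rintro rfl; simp⟩
      rw [this]; omega

end PrefixCount

def IsPrefixDominant (m : ℕ) {N : ℕ} (s : Multiset (ZMod N)) : Prop :=
  ∀ t < N, t ≤ m * prefixCount s t

theorem existsUnique_isPrefixDominant_map_sub {m N : ℕ} [NeZero N] (s : Multiset (ZMod N))
    (hs : m * Multiset.card s + 1 = N) : ∃! r : ZMod N, IsPrefixDominant m (s.map (· - r)) := by
  set f : ℕ → ℤ := fun t => t - m * prefixCount s t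
  have hf : ∀ t, f (t + N) = f t + 1 := fun t => by
    simp only [f, add_comm t N, prefixCount_add, prefixCount_self, ZMod.natCast_self, sub_zero,
      Multiset.map_id']
    have hN : (N : ℤ) = m * Multiset.card s + 1 := by exact_mod_cast hs.symm
    push_cast
    linear_combination hN
  have hshift : ∀ a : ℕ, IsPrefixDominant m (s.map (· - (a : ZMod N))) ↔
      ∀ t < N, f (a + t) ≤ f a := fun a => by
    refine forall₂_congr fun t _ => ?_
    simp only [f, prefixCount_add, ← Nat.cast_le (α := ℤ)]
    push_cast
    constructor <;> intro h <;> linarith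
  obtain ⟨a, ⟨ha, hdom⟩, huniq⟩ := cycle_lemma hf
  refine ⟨a, (hshift a).2 hdom, fun r hr => ?_⟩
  rw [← ZMod.natCast_zmod_val r] at hr ⊢
  rw [huniq r.val ⟨ZMod.val_lt r, (hshift _).1 hr⟩]

section ParkingDistribution

variable {m n : ℕ}

lemma mem_PK_iff {p : Fin n → ℕ} :
    p ∈ PK m n ↔ Monotone p ∧ ∀ i : Fin n, 1 ≤ p i ∧ p i ≤ m * i + 1 := by
  simp [PK, BSeq]

variable (m) in
def toSym (p : Fin n → ℕ) : Sym (ZMod (m * n + 1)) n :=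
  ⟨univ.val.map fun i => ((p i - 1 : ℕ) : ZMod (m * n + 1)), by simp⟩

lemma prefixCount_toSym {p : Fin n → ℕ} (hp : ∀ i, p i ∈ Set.Icc 1 (m * n + 1)) {t : ℕ}
    (ht : t ≤ m * n + 1) : prefixCount (toSym m p).toMultiset t = #{i | p i ≤ t} := by
  rw [prefixCount_eq_card_filter _ ht, toSym, Sym.coe_mk, Multiset.filter_map, Multiset.card_map]
  refine congrArg Multiset.card (Multiset.filter_congr fun i _ => ?_)
  rw [Function.comp_apply, ZMod.val_cast_of_lt (by have := (hp i).2; omega)]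
  have := (hp i).1
  omega

lemma mem_PK_iff_isPrefixDominant {p : Fin n → ℕ} (hmono : Monotone p)
    (hp : ∀ i, p i ∈ Set.Icc 1 (m * n + 1)) :
    p ∈ PK m n ↔ IsPrefixDominant m (toSym m p).toMultiset := by
  simp only [mem_PK_iff, hmono, true_and, IsPrefixDominant]
  constructor
  · intro hb t ht
    rw [prefixCount_toSym hp ht.le]
    rcases lt_or_ge #{i | p i ≤ t} n with hk | hk
    · have h₁ : ¬ p ⟨_, hk⟩ ≤ t :=
        (Tuple.lt_card_le_iff_apply_le_of_monotone hmono).not.1 (lt_irrefl _)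
      have h₂ := (hb ⟨_, hk⟩).2
      dsimp only at h₂
      omega
    · nlinarith
  · intro hd i
    refine ⟨(hp i).1, ?_⟩
    rcases lt_or_ge (m * i + 1) (m * n + 1) with h | h
    · have hi := hd _ h
      rw [prefixCount_toSym hp h.le] at hi
      refine (Tuple.lt_card_le_iff_apply_le_of_monotone hmono).1 ?_
      by_contra! hle
      nlinarith
    · exact (hp i).2.trans h

lemma eq_of_toSym_eq {p q : Fin n → ℕ} (hpm : Monotone p) (hqm : Monotone q)
    (hp : ∀ i, p i ∈ Set.Icc 1 (m * n + 1)) (hq : ∀ i, q i ∈ Set.Icc 1 (m * n + 1))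
    (h : toSym m p = toSym m q) : p = q := by
  have hcard : ∀ t ≤ m * n + 1, #{i | p i ≤ t} = #{i | q i ≤ t} := fun t ht => by
    rw [← prefixCount_toSym hp ht, ← prefixCount_toSym hq ht, h]
  funext i
  apply le_antisymm
  · rw [← Tuple.lt_card_le_iff_apply_le_of_monotone hpm, hcard _ (hq i).2,
      Tuple.lt_card_le_iff_apply_le_of_monotone hqm]
  · rw [← Tuple.lt_card_le_iff_apply_le_of_monotone hqm, ← hcard _ (hp i).2,
      Tuple.lt_card_le_iff_apply_le_of_monotone hpm]

variable (m) in
def ofSym (s : Sym (ZMod (m * n + 1)) n) (i : Fin n) : ℕ :=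
  (s.toMultiset.map ZMod.val |>.sort (· ≤ ·))[i.val]'(by simp) + 1

lemma monotone_ofSym (s : Sym (ZMod (m * n + 1)) n) : Monotone (ofSym m s) := fun i j hij =>
  Nat.add_le_add_right ((Multiset.pairwise_sort _ _).rel_get_of_le (a := ⟨i, by simp⟩)
    (b := ⟨j, by simp⟩) hij) 1

lemma ofSym_mem_Icc (s : Sym (ZMod (m * n + 1)) n) (i : Fin n) :
    ofSym m s i ∈ Set.Icc 1 (m * n + 1) := by
  have := List.getElem_mem (l := s.toMultiset.map ZMod.val |>.sort (· ≤ ·))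
    (n := i.val) (by simp)
  simp only [Multiset.mem_sort, Multiset.mem_map] at this
  obtain ⟨x, -, hx⟩ := this
  have := ZMod.val_lt x
  simp only [ofSym, Set.mem_Icc]
  omega

lemma toSym_ofSym (s : Sym (ZMod (m * n + 1)) n) : toSym m (ofSym m s) = s := by
  apply Sym.coe_injective
  simp only [toSym, ofSym, Nat.add_sub_cancel, Fin.univ_val_map, Sym.coe_mk]
  set l := s.toMultiset.map ZMod.val |>.sort (· ≤ ·)
  have hofFn : List.ofFn (fun i : Fin n => ((l[i.val]'(by simp [l]) : ℕ) : ZMod (m * n + 1))) =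
      l.map (↑) := List.ext_getElem (by simp [l]) (by simp)
  rw [hofFn, ← Multiset.map_coe, Multiset.sort_eq, Multiset.map_map]
  simp

lemma card_PK_eq_card_isPrefixDominant : #(PK m n) =
    #{s : Sym (ZMod (m * n + 1)) n | IsPrefixDominant m s.toMultiset} := by
  have hPK : ∀ p ∈ PK m n, Monotone p ∧ ∀ i, p i ∈ Set.Icc 1 (m * n + 1) := fun p hp => by
    obtain ⟨hmono, hb⟩ := mem_PK_iff.1 hp
    refine ⟨hmono, fun i => ⟨(hb i).1, (hb i).2.trans ?_⟩⟩
    gcongr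
    exact i.is_lt.le
  refine card_nbij (toSym m) (fun p hp => ?_) (fun p hp q hq => ?_) (fun s hs => ?_)
  · exact (mem_filter_univ _).2 ((mem_PK_iff_isPrefixDominant (hPK p hp).1 (hPK p hp).2).1 hp)
  · exact eq_of_toSym_eq (hPK p hp).1 (hPK q hq).1 (hPK p hp).2 (hPK q hq).2
  · refine ⟨ofSym m s, (mem_PK_iff_isPrefixDominant (monotone_ofSym s) (ofSym_mem_Icc s)).2 ?_,
      toSym_ofSym s⟩
    rw [toSym_ofSym]
    simpa using hs

end ParkingDistribution

theorem stmt0_general (m : ℕ) (n : ℕ) :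
    (m * n + 1) * (PK m n).card = Nat.choose (m * n + n) n := by
  have hrot := card_mul_card_filter_eq_card (fun r => Sym.equivCongr (Equiv.subRight r))
    (fun s : Sym (ZMod (m * n + 1)) n => IsPrefixDominant m s.toMultiset)
    fun s => existsUnique_isPrefixDominant_map_sub s.toMultiset (by rw [Sym.card_coe])
  rw [ZMod.card, Sym.card_sym_eq_choose, ZMod.card] at hrot
  rw [card_PK_eq_card_isPrefixDominant, hrot]
  congr 1
  omega

theorem stmt0 (m : ℕ) (hm : 1 ≤ m) (n : ℕ) :
    (m * n + 1) * (PK m n).card = Nat.choose (m * n + n) n :=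
  stmt0_general m n

end
end

section
/- For all integers n ≥ 0, k ≥ 1 and 0 ≤ r < m−1, the counts h_{n,k,r} satisfy the convolution recurrence h_{n,k,r} = Σ_{j=0}^{n} h_{j,k,r+1} · h_{n−j,1,m−1}. -/
open scoped Classical
open Finset

noncomputable section

/-! A sequence bounded by `b i = m * (i + k) - r` splits at the first index `j` where it reaches
its bound: before `j` it stays below the bound `b i - 1 = m * (i + k) - (r + 1)`, and from `j` on,
subtracting `b j - 1` leaves a u-parking distribution, because `b (j + t) - b j = m * t`.
The splitting works for any monotone positive bound `b`. -/

lemma mem_BSeq {n : ℕ} {b : ℕ → ℕ} {p : Fin n → ℕ} :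
    p ∈ BSeq n b ↔ Monotone p ∧ ∀ i : Fin n, 1 ≤ p i ∧ p i ≤ b i := by
  simp [BSeq]

lemma Fin.monotone_append {α : Type*} [Preorder α] {j l : ℕ} {a : Fin j → α} {q : Fin l → α}
    (ha : Monotone a) (hq : Monotone q) (haq : ∀ i t, a i ≤ q t) :
    Monotone (Fin.append a q) := by
  intro x y hxy
  induction x using Fin.addCases with
  | left i =>
    induction y using Fin.addCases with
    | left i' => simpa using ha ((Fin.strictMono_castAdd l).le_iff_le.1 hxy)
    | right t => simpa using haq i t
  | right t =>
    induction y using Fin.addCases with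
    | left i' => simp only [Fin.le_def, Fin.val_natAdd, Fin.val_castAdd] at hxy; omega
    | right t' => simpa using hq ((Fin.strictMono_natAdd j).le_iff_le.1 hxy)

def firstHit (b : ℕ → ℕ) {n : ℕ} (p : Fin n → ℕ) : ℕ :=
  Nat.find (⟨n, Or.inl rfl⟩ : ∃ j, j = n ∨ ∃ h : j < n, b j ≤ p ⟨j, h⟩)

lemma firstHit_le (b : ℕ → ℕ) {n : ℕ} (p : Fin n → ℕ) : firstHit b p ≤ n :=
  Nat.find_min' _ (Or.inl rfl)

section firstHit

variable {b : ℕ → ℕ}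

lemma firstHit_add_eq_iff {j l : ℕ} {p : Fin (j + l) → ℕ} :
    firstHit b p = j ↔
      (∀ i : Fin j, p (Fin.castAdd l i) < b i) ∧ ∀ h : 0 < l, b j ≤ p (Fin.natAdd j ⟨0, h⟩) := by
  rw [firstHit, Nat.find_eq_iff]
  constructor
  · rintro ⟨hj, hlt⟩
    refine ⟨fun i => ?_, fun hl => ?_⟩
    · have := hlt i i.isLt
      push Not at this
      exact this.2 _
    · rcases hj with hj | ⟨_, hj⟩
      · omega
      · exact hj
  · rintro ⟨hlt, hj⟩
    refine ⟨?_, fun i hi => ?_⟩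
    · rcases Nat.eq_zero_or_pos l with rfl | hl
      · exact Or.inl rfl
      · exact Or.inr ⟨by omega, hj hl⟩
    · push Not
      exact ⟨by omega, fun _ => hlt ⟨i, hi⟩⟩

lemma le_of_firstHit_add_eq {j l : ℕ} {p : Fin (j + l) → ℕ} (hp : Monotone p)
    (hj : firstHit b p = j) (t : Fin l) : b j ≤ p (Fin.natAdd j t) :=
  (firstHit_add_eq_iff.1 hj).2 t.pos |>.trans (hp (by simp [Fin.le_def]))

lemma mem_BSeq_of_firstHit_add_eq (hb0 : ∀ i, 0 < b i) {j l : ℕ} {p : Fin (j + l) → ℕ} (hp : p ∈ BSeq (j + l) b)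
    (hj : firstHit b p = j) :
    (fun i => p (Fin.castAdd l i)) ∈ BSeq j (fun i => b i - 1) ∧
      (fun t => p (Fin.natAdd j t) - (b j - 1)) ∈ BSeq l (fun t => b (j + t) - b j + 1) := by
  obtain ⟨hmono, hbd⟩ := mem_BSeq.1 hp
  refine ⟨mem_BSeq.2 ⟨hmono.comp (Fin.strictMono_castAdd l).monotone, fun i => ?_⟩,
    mem_BSeq.2 ⟨fun t t' htt' => Nat.sub_le_sub_right
      (hmono ((Fin.strictMono_natAdd j).monotone htt')) _, fun t => ?_⟩⟩
  · have := (firstHit_add_eq_iff.1 hj).1 i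
    have := (hbd (Fin.castAdd l i)).1
    omega
  · have := hb0 j
    have := le_of_firstHit_add_eq hmono hj t
    have := (hbd (Fin.natAdd j t)).2
    simp only [Fin.val_natAdd] at this
    omega

lemma append_mem_BSeq (hb : Monotone b) (hb0 : ∀ i, 0 < b i) {j l : ℕ} {a : Fin j → ℕ} {q : Fin l → ℕ}
    (ha : a ∈ BSeq j (fun i => b i - 1)) (hq : q ∈ BSeq l (fun t => b (j + t) - b j + 1)) :
    Fin.append a (fun t => q t + (b j - 1)) ∈ BSeq (j + l) b ∧
      firstHit b (Fin.append a (fun t => q t + (b j - 1))) = j := by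
  obtain ⟨ha, hab⟩ := mem_BSeq.1 ha
  obtain ⟨hq, hqb⟩ := mem_BSeq.1 hq
  have hbj := hb0 j
  have hab' (i : Fin j) : a i < b j := by
    have := (hab i).2
    have := hb i.isLt.le
    have := hb0 i
    omega
  simp only [mem_BSeq, firstHit_add_eq_iff, Fin.append_left, Fin.append_right]
  refine ⟨⟨Fin.monotone_append ha (fun t t' h => Nat.add_le_add_right (hq h) _) fun i t => ?_,
    fun x => ?_⟩, fun i => ?_, fun hl => ?_⟩
  · have := hab' i
    have := (hqb t).1
    omega
  · induction x using Fin.addCases with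
    | left i =>
      have := hab i
      have := hab' i
      simp only [Fin.append_left, Fin.val_castAdd]
      omega
    | right t =>
      have := hqb t
      have := hb (Nat.le_add_right j t)
      simp only [Fin.append_right, Fin.val_natAdd]
      omega
  · have := (hab i).2
    have := hb0 i
    omega
  · have := (hqb ⟨0, hl⟩).1
    omega

theorem card_filter_firstHit_eq (hb : Monotone b) (hb0 : ∀ i, 0 < b i) (j l : ℕ) :
    ((BSeq (j + l) b).filter (firstHit b · = j)).card =
      (BSeq j (fun i => b i - 1)).card * (BSeq l (fun t => b (j + t) - b j + 1)).card := by
  rw [← card_product]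
  refine card_nbij'
    (fun p => (fun i => p (Fin.castAdd l i), fun t => p (Fin.natAdd j t) - (b j - 1)))
    (fun aq => Fin.append aq.1 (fun t => aq.2 t + (b j - 1))) ?_ ?_ ?_ ?_
  · rintro p hp
    rw [coe_filter] at hp
    exact mem_coe.2 (mem_product.2 (mem_BSeq_of_firstHit_add_eq hb0 hp.1 hp.2))
  · rintro ⟨a, q⟩ haq
    rw [coe_product, Set.mem_prod] at haq
    rw [coe_filter]
    exact append_mem_BSeq hb hb0 haq.1 haq.2
  · rintro p hp
    rw [coe_filter] at hp
    dsimp only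
    conv_rhs => rw [← Fin.append_castAdd_natAdd (f := p)]
    congr 1
    funext t
    have := le_of_firstHit_add_eq (mem_BSeq.1 hp.1).1 hp.2 t
    omega
  · rintro ⟨a, q⟩ -
    simp only [Fin.append_left, Fin.append_right, Nat.add_sub_cancel]

theorem card_BSeq_eq_sum (hb : Monotone b) (hb0 : ∀ i, 0 < b i) (n : ℕ) :
    (BSeq n b).card = ∑ j ∈ range (n + 1),
      (BSeq j (fun i => b i - 1)).card * (BSeq (n - j) (fun t => b (j + t) - b j + 1)).card := by
  rw [card_eq_sum_card_fiberwise fun p _ => mem_range_succ_iff.2 (firstHit_le b p)]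
  refine sum_congr rfl fun j hj => ?_
  obtain ⟨l, rfl⟩ := Nat.exists_eq_add_of_le (mem_range_succ_iff.1 hj)
  rw [Nat.add_sub_cancel_left]
  exact card_filter_firstHit_eq hb hb0 j l

end firstHit

theorem stmt2_general (m : ℕ) (n k r : ℕ) (hk : 1 ≤ k) (hr : r < m - 1) :
    hcnt m n k r = ∑ j ∈ Finset.range (n + 1), hcnt m j k (r + 1) * hcnt m (n - j) 1 (m - 1) := by
  have hm_le (i : ℕ) : m ≤ m * (i + k) := Nat.le_mul_of_pos_right m (by omega)
  have hb : Monotone fun i => m * (i + k) - r := fun i i' h =>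
    Nat.sub_le_sub_right (Nat.mul_le_mul_left m (by omega)) r
  have hb0 (i : ℕ) : 0 < m * (i + k) - r := by
    have := hm_le i
    omega
  rw [hcnt, card_BSeq_eq_sum hb hb0]
  refine sum_congr rfl fun j _ => ?_
  have hpre : (fun i => m * (i + k) - r - 1) = fun i => m * (i + k) - (r + 1) := by
    funext i
    omega
  have hsuf : (fun t => m * (j + t + k) - r - (m * (j + k) - r) + 1) =
      fun t => m * (t + 1) - (m - 1) := by
    funext t
    have := hm_le j
    rw [show m * (j + t + k) = m * (j + k) + m * t by ring, show m * (t + 1) = m * t + m by ring]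
    omega
  rw [hcnt, hcnt, hpre, hsuf]

theorem stmt2 (m : ℕ) (hm : 1 ≤ m) (n k r : ℕ) (hk : 1 ≤ k) (hr : r < m - 1) :
    hcnt m n k r = ∑ j ∈ Finset.range (n + 1), hcnt m j k (r + 1) * hcnt m (n - j) 1 (m - 1) :=
  stmt2_general m n k r hk hr

end
end

section
/- For all integers n ≥ 0 and k ≥ 0, the number of u-parking distributions p of length n with luck(p) = k equals the number of u-parking distributions p' of length n with ω_1(p') = k. -/
open scoped Classical
open Finset

noncomputable section

/-!
Both statistics have the same tail counts: among the u-parking distributions of length `n + k`,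
those with at least `k` lucky entries and those with at least `k` entries equal to `1` are both
equinumerous with the sequences `1 ≤ p i ≤ m * (i + k) + 1` of length `n`. For ones, drop the
`k` leading ones. For luck, delete the first lucky entry: the entries before it stay strictly
below their bounds, the entries after it move one place left and so gain `m` in their bound,
and the lucky entries after it stay lucky; iterate `k` times. Equal tail counts give equal
point counts.
-/

lemma Fin.card_filter_univ_succAbove {n : ℕ} (P : Fin (n + 1) → Prop) [DecidablePred P]
    (i : Fin (n + 1)) : #{x | P x} = (if P i then 1 else 0) + #{x | P (i.succAbove x)} := by
  simp only [card_filter]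
  exact Fin.sum_univ_succAbove _ i

lemma Fin.monotone_insertNth {α : Type*} [Preorder α] {n : ℕ} {q : Fin (n + 1)} {x : α}
    {f : Fin n → α} (hf : Monotone f) (hlt : ∀ i, i.castSucc < q → f i ≤ x)
    (hgt : ∀ i, q ≤ i.castSucc → x ≤ f i) : Monotone (q.insertNth x f) := by
  intro a b hab
  cases a using succAboveCases q <;> cases b using succAboveCases q
  · simp
  · rename_i j
    have : q ≤ j.castSucc :=
      (lt_succAbove_iff_le_castSucc q j).mp (hab.lt_of_ne (succAbove_ne q j).symm)
    simpa using hgt _ this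
  · rename_i j
    have : j.castSucc < q :=
      (succAbove_lt_iff_castSucc_lt q j).mp (hab.lt_of_ne (succAbove_ne q j))
    simpa using hlt _ this
  · simpa using hf <| (strictMono_succAbove _).le_iff_le.mp hab

theorem card_filter_eq_of_forall_card_filter_le_eq {α : Type*} (s : Finset α) (f g : α → ℕ)
    (h : ∀ k, #{a ∈ s | k ≤ f a} = #{a ∈ s | k ≤ g a}) (k : ℕ) :
    #{a ∈ s | f a = k} = #{a ∈ s | g a = k} := by
  have key (f : α → ℕ) : #{a ∈ s | f a = k} = #{a ∈ s | k ≤ f a} - #{a ∈ s | k + 1 ≤ f a} := by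
    rw [← card_sdiff_of_subset (monotone_filter_right s fun _ _ => Nat.le_of_succ_le)]
    congr 1
    ext a
    simp only [mem_filter, mem_sdiff, not_and, not_le]
    grind
  rw [key, key, h, h]

section ShiftedParking

variable (m c : ℕ)

def shiftedPK (n : ℕ) : Finset (Fin n → ℕ) := BSeq n fun i => m * (i + c) + 1

def shiftedLuck {n : ℕ} (p : Fin n → ℕ) : ℕ := #{i | p i = m * (i + c) + 1}

/-- The first index `i` at which `q` reaches the bound `m * (i + c) + 1`, or `n` if there is
none. -/
def firstReach {n : ℕ} (q : Fin n → ℕ) : Fin (n + 1) :=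
  Fin.find (fun i => ∀ j : Fin n, j.castSucc = i → m * (j + c) + 1 ≤ q j)
    ⟨Fin.last n, fun j hj => absurd hj (Fin.castSucc_lt_last j).ne⟩

def insertLucky {n : ℕ} (q : Fin n → ℕ) : Fin (n + 1) → ℕ :=
  (firstReach m c q).insertNth (m * (firstReach m c q + c) + 1) q

/-- On `shiftedPK m c (n + 1)` an entry reaches its bound exactly when it is lucky, so this
deletes the first lucky entry; `firstReach` of `Fin.init p` falls back to the last index, which
is right when the last entry is the only lucky one. -/
def deleteFirstLucky {n : ℕ} (p : Fin (n + 1) → ℕ) : Fin n → ℕ :=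
  (firstReach m c (Fin.init p)).removeNth p

variable {m c}

lemma firstReach_eq_iff {n : ℕ} {q : Fin n → ℕ} {I : Fin (n + 1)} :
    firstReach m c q = I ↔ (∀ j : Fin n, j.castSucc < I → q j < m * (j + c) + 1) ∧
      ∀ j : Fin n, j.castSucc = I → m * (j + c) + 1 ≤ q j := by
  rw [firstReach, Fin.find_eq_iff, and_comm]
  refine and_congr_left fun _ => ⟨fun h j hj => ?_, fun h i hi hreach => ?_⟩
  · simpa using h _ hj
  · obtain ⟨j, rfl⟩ := Fin.exists_castSucc_eq.mpr (Fin.ne_last_of_lt hi)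
    exact (h j hi).not_ge (hreach j rfl)

lemma firstReach_init_insertLucky {n : ℕ} (q : Fin n → ℕ) :
    firstReach m c (Fin.init (insertLucky m c q)) = firstReach m c q := by
  obtain ⟨hbelow, -⟩ := firstReach_eq_iff.mp (rfl : firstReach m c q = _)
  refine firstReach_eq_iff.mpr ⟨fun j hj => ?_, fun j hj => ?_⟩
  · rw [Fin.init, insertLucky, ← Fin.succAbove_of_castSucc_lt _ _ hj,
      Fin.insertNth_apply_succAbove]
    exact hbelow j hj
  · rw [Fin.init, insertLucky, hj, Fin.insertNth_apply_same, ← hj, Fin.val_castSucc]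

lemma deleteFirstLucky_insertLucky {n : ℕ} (q : Fin n → ℕ) :
    deleteFirstLucky m c (insertLucky m c q) = q := by
  rw [deleteFirstLucky, firstReach_init_insertLucky, insertLucky, Fin.removeNth_insertNth]

lemma firstReach_removeNth {n : ℕ} {p : Fin (n + 1) → ℕ} (hp : Monotone p) :
    firstReach m c ((firstReach m c (Fin.init p)).removeNth p) = firstReach m c (Fin.init p) := by
  obtain ⟨hbelow, hat⟩ := firstReach_eq_iff.mp (rfl : firstReach m c (Fin.init p) = _)
  refine firstReach_eq_iff.mpr ⟨fun j hj => ?_, fun j hj => ?_⟩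
  · rw [Fin.removeNth_apply, Fin.succAbove_of_castSucc_lt _ _ hj]
    exact hbelow j hj
  · rw [Fin.removeNth_apply, Fin.succAbove_of_le_castSucc _ _ hj.ge]
    exact (hat j hj).trans (hp (Fin.castSucc_le_succ j))

lemma apply_firstReach_init {n : ℕ} {p : Fin (n + 1) → ℕ} (hp : p ∈ shiftedPK m c (n + 1))
    (hl : 0 < shiftedLuck m c p) :
    p (firstReach m c (Fin.init p)) = m * (firstReach m c (Fin.init p) + c) + 1 := by
  obtain ⟨hbelow, hat⟩ := firstReach_eq_iff.mp (rfl : firstReach m c (Fin.init p) = _)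
  obtain ⟨i, hi⟩ : ∃ i, p i = m * (i + c) + 1 := by
    simpa [shiftedLuck, card_pos, filter_nonempty_iff] using hl
  rcases (firstReach m c (Fin.init p)).eq_castSucc_or_eq_last with ⟨j, hj⟩ | hlast
  · rw [hj]
    exact le_antisymm ((mem_BSeq.mp hp).2 _).2 (hat j hj.symm)
  · rw [hlast]
    obtain ⟨j, rfl⟩ | rfl := i.eq_castSucc_or_eq_last
    · exact absurd hi (hbelow j (hlast ▸ Fin.castSucc_lt_last j)).ne
    · exact hi

lemma insertLucky_deleteFirstLucky {n : ℕ} {p : Fin (n + 1) → ℕ}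
    (hp : p ∈ shiftedPK m c (n + 1)) (hl : 0 < shiftedLuck m c p) :
    insertLucky m c (deleteFirstLucky m c p) = p := by
  rw [insertLucky, deleteFirstLucky, firstReach_removeNth (mem_BSeq.mp hp).1,
    ← apply_firstReach_init hp hl, Fin.insertNth_self_removeNth]

lemma removeNth_mem_shiftedPK {n : ℕ} {p : Fin (n + 1) → ℕ} (hp : p ∈ shiftedPK m c (n + 1))
    (i : Fin (n + 1)) : i.removeNth p ∈ shiftedPK m (c + 1) n := by
  obtain ⟨hmono, hbound⟩ := mem_BSeq.mp hp
  refine mem_BSeq.mpr ⟨hmono.comp (Fin.strictMono_succAbove i).monotone, fun j => ?_⟩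
  obtain ⟨hpos, hle⟩ := hbound (i.succAbove j)
  refine ⟨hpos, hle.trans ?_⟩
  have : (i.succAbove j : ℕ) ≤ j + 1 := by
    rcases lt_or_ge j.castSucc i with h | h
    · rw [Fin.succAbove_of_castSucc_lt _ _ h, Fin.val_castSucc]
      omega
    · rw [Fin.succAbove_of_le_castSucc _ _ h, Fin.val_succ]
  have := Nat.mul_le_mul_left m (show (i.succAbove j : ℕ) + c ≤ j + (c + 1) by omega)
  omega

lemma insertNth_mem_shiftedPK {n : ℕ} {q : Fin n → ℕ} (hq : q ∈ shiftedPK m (c + 1) n)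
    {I : Fin (n + 1)} (hbelow : ∀ j : Fin n, j.castSucc < I → q j < m * (j + c) + 1)
    (hat : ∀ j : Fin n, j.castSucc = I → m * (j + c) + 1 ≤ q j) :
    I.insertNth (m * (I + c) + 1) q ∈ shiftedPK m c (n + 1) := by
  obtain ⟨hmono, hbound⟩ := mem_BSeq.mp hq
  refine mem_BSeq.mpr
    ⟨Fin.monotone_insertNth hmono (fun j hj => ?_) (fun j hj => ?_), fun k => ?_⟩
  · have : m * (j + c) ≤ m * (I + c) := by
      gcongr
      exact hj.le
    have := hbelow j hj
    omega
  · obtain ⟨i, rfl⟩ :=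
      Fin.exists_castSucc_eq.mpr (Fin.ne_last_of_lt (hj.trans_lt (Fin.castSucc_lt_last j)))
    exact (hat i rfl).trans (hmono (Fin.castSucc_le_castSucc_iff.mp hj))
  · rcases eq_or_ne k I with rfl | hk
    · rw [Fin.insertNth_apply_same]
      omega
    obtain ⟨j, rfl⟩ := Fin.exists_succAbove_eq hk
    rw [Fin.insertNth_apply_succAbove]
    refine ⟨(hbound j).1, ?_⟩
    rcases lt_or_ge j.castSucc I with h | h
    · rw [Fin.succAbove_of_castSucc_lt _ _ h, Fin.val_castSucc]
      exact (hbelow j h).le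
    · rw [Fin.succAbove_of_le_castSucc _ _ h, Fin.val_succ, add_right_comm]
      exact (hbound j).2

lemma insertLucky_mem_shiftedPK {n : ℕ} {q : Fin n → ℕ} (hq : q ∈ shiftedPK m (c + 1) n) :
    insertLucky m c q ∈ shiftedPK m c (n + 1) :=
  insertNth_mem_shiftedPK hq (firstReach_eq_iff.mp rfl).1 (firstReach_eq_iff.mp rfl).2

lemma shiftedLuck_insertLucky {n : ℕ} (q : Fin n → ℕ) :
    shiftedLuck m c (insertLucky m c q) = shiftedLuck m (c + 1) q + 1 := by
  obtain ⟨hbelow, -⟩ := firstReach_eq_iff.mp (rfl : firstReach m c q = _)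
  rw [shiftedLuck, Fin.card_filter_univ_succAbove _ (firstReach m c q), insertLucky,
    Fin.insertNth_apply_same, if_pos rfl, add_comm, shiftedLuck]
  congr 2
  ext j
  simp only [mem_filter, mem_univ, true_and, Fin.insertNth_apply_succAbove]
  rcases lt_or_ge j.castSucc (firstReach m c q) with h | h
  · have hlt := hbelow j h
    have hle : m * (j + c) ≤ m * (j + (c + 1)) := by gcongr; omega
    rw [Fin.succAbove_of_castSucc_lt _ _ h, Fin.val_castSucc]
    omega
  · rw [Fin.succAbove_of_le_castSucc _ _ h, Fin.val_succ, add_right_comm, add_assoc]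

end ShiftedParking

section Counting

variable {m : ℕ}

lemma card_filter_succ_le_shiftedLuck (c n k : ℕ) :
    #{p ∈ shiftedPK m c (n + 1) | k + 1 ≤ shiftedLuck m c p} =
      #{q ∈ shiftedPK m (c + 1) n | k ≤ shiftedLuck m (c + 1) q} := by
  refine card_nbij' (deleteFirstLucky m c) (insertLucky m c) (fun p hp => ?_) (fun q hq => ?_)
    (fun p hp => ?_) (fun q _ => deleteFirstLucky_insertLucky q)
  · obtain ⟨hpS, hpl⟩ := mem_filter.mp hp
    have hluck := shiftedLuck_insertLucky (m := m) (c := c) (deleteFirstLucky m c p)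
    rw [insertLucky_deleteFirstLucky hpS (by omega)] at hluck
    exact mem_filter.mpr ⟨removeNth_mem_shiftedPK hpS _, by omega⟩
  · obtain ⟨hqS, hql⟩ := mem_filter.mp hq
    exact mem_filter.mpr ⟨insertLucky_mem_shiftedPK hqS, by rw [shiftedLuck_insertLucky]; omega⟩
  · obtain ⟨hpS, hpl⟩ := mem_filter.mp hp
    exact insertLucky_deleteFirstLucky hpS (by omega)

lemma freq_eq_ite_add_freq_removeNth (a : ℕ) {n : ℕ} (p : Fin (n + 1) → ℕ) (i : Fin (n + 1)) :
    freq a p = (if p i = a then 1 else 0) + freq a (i.removeNth p) :=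
  Fin.card_filter_univ_succAbove _ i

lemma apply_zero_eq_one_of_freq_one_pos {n : ℕ} {p : Fin (n + 1) → ℕ} (hp : Monotone p)
    (hpos : ∀ i, 1 ≤ p i) (h : 0 < freq 1 p) : p 0 = 1 := by
  obtain ⟨i, hi⟩ := card_pos.mp h
  have := hp (Fin.zero_le i)
  have := hpos 0
  simp only [mem_filter, mem_univ, true_and] at hi
  omega

lemma insertNth_zero_one_mem_shiftedPK {c n : ℕ} {q : Fin n → ℕ}
    (hq : q ∈ shiftedPK m (c + 1) n) : Fin.insertNth 0 1 q ∈ shiftedPK m c (n + 1) := by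
  obtain ⟨hmono, hbound⟩ := mem_BSeq.mp hq
  refine mem_BSeq.mpr ⟨Fin.monotone_insertNth hmono (fun j hj => absurd hj (Fin.not_lt_zero _))
    (fun j _ => (hbound j).1), fun k => ?_⟩
  cases k using Fin.cases with
  | zero => simp
  | succ j =>
    rw [Fin.insertNth_zero', Fin.cons_succ, Fin.val_succ, add_right_comm]
    exact hbound j

lemma card_filter_succ_le_freq_one (c n k : ℕ) :
    #{p ∈ shiftedPK m c (n + 1) | k + 1 ≤ freq 1 p} =
      #{q ∈ shiftedPK m (c + 1) n | k ≤ freq 1 q} := by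
  refine card_nbij' (Fin.removeNth 0) (Fin.insertNth (α := fun _ => ℕ) 0 1) (fun p hp => ?_)
    (fun q hq => ?_) (fun p hp => ?_) (fun q _ => Fin.removeNth_insertNth (α := fun _ => ℕ) 0 1 q)
  · obtain ⟨hpS, hpl⟩ := mem_filter.mp hp
    have := freq_eq_ite_add_freq_removeNth 1 p 0
    refine mem_filter.mpr ⟨removeNth_mem_shiftedPK hpS _, ?_⟩
    split_ifs at this <;> omega
  · obtain ⟨hqS, hql⟩ := mem_filter.mp hq
    have := freq_eq_ite_add_freq_removeNth 1 (Fin.insertNth 0 1 q) 0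
    rw [Fin.insertNth_apply_same, Fin.removeNth_insertNth, if_pos rfl] at this
    exact mem_filter.mpr ⟨insertNth_zero_one_mem_shiftedPK hqS, by omega⟩
  · obtain ⟨hpS, hpl⟩ := mem_filter.mp hp
    obtain ⟨hmono, hbound⟩ := mem_BSeq.mp hpS
    have h0 := apply_zero_eq_one_of_freq_one_pos hmono (fun i => (hbound i).1) (by omega)
    exact Fin.insertNth_eq_iff.mpr ⟨h0.symm, rfl⟩

lemma card_filter_le_eq_card_shiftedPK (s : ℕ → ∀ n : ℕ, (Fin n → ℕ) → ℕ)
    (hs : ∀ c n k, #{p ∈ shiftedPK m c (n + 1) | k + 1 ≤ s c (n + 1) p} =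
      #{q ∈ shiftedPK m (c + 1) n | k ≤ s (c + 1) n q})
    (n k c : ℕ) :
    #{p ∈ shiftedPK m c (n + k) | k ≤ s c (n + k) p} = #(shiftedPK m (c + k) n) := by
  induction k generalizing c with
  | zero => simp
  | succ k ih => rw [← add_assoc, hs, ih, add_right_comm, add_assoc]

end Counting

theorem card_filter_le_luck_eq_card_filter_le_freq_one (m n k : ℕ) :
    #{p ∈ PK m n | k ≤ luck m p} = #{p ∈ PK m n | k ≤ freq 1 p} := by
  rcases le_or_gt k n with hk | hk
  · obtain ⟨n, rfl⟩ := Nat.exists_eq_add_of_le' hk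
    exact (card_filter_le_eq_card_shiftedPK (fun c _ p => shiftedLuck m c p)
      card_filter_succ_le_shiftedLuck n k 0).trans
      (card_filter_le_eq_card_shiftedPK (fun _ _ p => freq 1 p)
      card_filter_succ_le_freq_one n k 0).symm
  · have hluck (p : Fin n → ℕ) : luck m p < k :=
      ((card_le_univ _).trans_eq (Fintype.card_fin n)).trans_lt hk
    have hfreq (p : Fin n → ℕ) : freq 1 p < k :=
      ((card_le_univ _).trans_eq (Fintype.card_fin n)).trans_lt hk
    rw [filter_false_of_mem fun p _ => (hluck p).not_ge,
      filter_false_of_mem fun p _ => (hfreq p).not_ge]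

theorem stmt5_general (m : ℕ) (n k : ℕ) :
    ((PK m n).filter (fun p => luck m p = k)).card =
      ((PK m n).filter (fun p => freq 1 p = k)).card :=
  card_filter_eq_of_forall_card_filter_le_eq _ _ _
    (card_filter_le_luck_eq_card_filter_le_freq_one m n) k

theorem stmt5 (m : ℕ) (hm : 1 ≤ m) (n k : ℕ) :
    ((PK m n).filter (fun p => luck m p = k)).card =
      ((PK m n).filter (fun p => freq 1 p = k)).card :=
  stmt5_general m n k
end
end

section
/- For every n ≥ 0 there exists an involution τ : PK(n) → PK(n) (i.e. τ∘τ is the identity) such that luck(p) = ω_1(τ(p)) and ω_1(p) = luck(τ(p)) for every p ∈ PK(n). -/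
open scoped Classical
open Finset

noncomputable section

/-!
A u-parking distribution starts with `1`. Its tail, which lies under the line `m j + m + 1`,
is cut at its first crossings of the lines `m j + 1 + ℓ` (`ℓ = 1, …, m`) into `m + 1` pieces;
shifted down, these are u-parking distributions `P_0, …, P_m`, and any `m + 1` u-parking
distributions glue back to such a tail. The involution `τ` keeps the leading `1`, applies itself
to the pieces and glues them back in reverse order. Entries `1` of the tail can only lie in `P_0`,
and its lucky entries only in `P_m`, where they are the lucky entries of `P_m`; reversing the
order of the pieces therefore exchanges the two statistics, by induction on the length.
-/

namespace ParkingInvolution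

variable {m : ℕ}

def UnderLine (m : ℕ) : ℕ → List ℕ → Prop
  | _, [] => True
  | b, x :: l => x ≤ b ∧ UnderLine m (b + m) l

structure IsParking (m b : ℕ) (l : List ℕ) : Prop where
  sorted : l.Pairwise (· ≤ ·)
  pos : ∀ x ∈ l, 1 ≤ x
  underLine : UnderLine m b l

namespace UnderLine

theorem mono {b b' : ℕ} (h : b ≤ b') {l : List ℕ} (hl : UnderLine m b l) :
    UnderLine m b' l := by
  induction l generalizing b b' with
  | nil => trivial
  | cons x l ih => exact ⟨hl.1.trans h, ih (by omega) hl.2⟩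

theorem le_of_mem {b : ℕ} {l : List ℕ} (hl : UnderLine m b l) {x : ℕ} (hx : x ∈ l) :
    x ≤ b + m * l.length := by
  induction l generalizing b with
  | nil => simp at hx
  | cons y l ih =>
    rcases List.mem_cons.mp hx with rfl | hx
    · exact hl.1.trans (Nat.le_add_right _ _)
    · have := ih hl.2 hx
      simp only [List.length_cons]
      linarith [Nat.mul_succ m l.length]

end UnderLine

theorem underLine_append {b : ℕ} {l l' : List ℕ} :
    UnderLine m b (l ++ l') ↔ UnderLine m b l ∧ UnderLine m (b + m * l.length) l' := by
  induction l generalizing b with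
  | nil => simp [UnderLine]
  | cons x l ih =>
    simp only [List.cons_append, UnderLine, ih, List.length_cons, and_assoc, Nat.mul_succ,
      Nat.add_assoc, Nat.add_comm m]

theorem underLine_map_add {b d : ℕ} {l : List ℕ} :
    UnderLine m (b + d) (l.map (· + d)) ↔ UnderLine m b l := by
  induction l generalizing b with
  | nil => simp [UnderLine]
  | cons x l ih =>
    simp only [List.map_cons, UnderLine, Nat.add_le_add_iff_right, Nat.add_right_comm b d m, ih]

theorem isParking_cons_iff {x : ℕ} {t : List ℕ} :
    IsParking m 1 (x :: t) ↔ x = 1 ∧ IsParking m (m + 1) t := by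
  constructor
  · rintro ⟨hs, hpos, hx, hunder⟩
    rw [List.pairwise_cons] at hs
    have := hpos x List.mem_cons_self
    exact ⟨by omega, hs.2, fun y hy => hpos y (List.mem_cons_of_mem x hy),
      Nat.add_comm 1 m ▸ hunder⟩
  · rintro ⟨rfl, hs, hpos, hunder⟩
    exact ⟨List.pairwise_cons.mpr ⟨hpos, hs⟩, List.forall_mem_cons.mpr ⟨le_rfl, hpos⟩, le_rfl,
      Nat.add_comm m 1 ▸ hunder⟩

def underLineLength (m : ℕ) : ℕ → List ℕ → ℕ
  | _, [] => 0
  | b, x :: l => if x ≤ b then underLineLength m (b + m) l + 1 else 0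

theorem underLineLength_le_length (b : ℕ) (l : List ℕ) : underLineLength m b l ≤ l.length := by
  induction l generalizing b with
  | nil => exact le_rfl
  | cons x l ih =>
    unfold underLineLength
    split_ifs
    · exact Nat.succ_le_succ (ih _)
    · exact Nat.zero_le _

theorem underLine_take_underLineLength (b : ℕ) (l : List ℕ) :
    UnderLine m b (l.take (underLineLength m b l)) := by
  induction l generalizing b with
  | nil => trivial
  | cons x l ih =>
    unfold underLineLength
    split_ifs with hx
    · exact ⟨hx, ih _⟩
    · trivial

theorem lt_of_mem_drop_underLineLength {b : ℕ} {l : List ℕ} (hl : l.Pairwise (· ≤ ·))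
    {y : ℕ} (hy : y ∈ l.drop (underLineLength m b l)) : b + m * underLineLength m b l < y := by
  induction l generalizing b with
  | nil => simp at hy
  | cons x l ih =>
    rw [List.pairwise_cons] at hl
    unfold underLineLength at hy ⊢
    split_ifs at hy ⊢ with hx
    · have := ih hl.2 hy
      rw [Nat.mul_succ]
      omega
    · rcases List.mem_cons.mp hy with rfl | hy
      · omega
      · have := hl.1 y hy
        omega

theorem underLineLength_append {b : ℕ} {l l' : List ℕ} (hl : UnderLine m b l)
    (hl' : ∀ y ∈ l'.head?, b + m * l.length < y) :
    underLineLength m b (l ++ l') = l.length := by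
  induction l generalizing b with
  | nil =>
    cases l' with
    | nil => rfl
    | cons y l' =>
      have := hl' y rfl
      simp only [List.nil_append, underLineLength, List.length_nil]
      split_ifs <;> omega
  | cons x l ih =>
    refine (if_pos hl.1).trans (congrArg (· + 1) (ih hl.2 fun y hy => ?_))
    have := hl' y hy
    rw [List.length_cons, Nat.mul_succ] at this
    omega

theorem map_sub_map_add {d : ℕ} {l : List ℕ} (h : ∀ x ∈ l, d ≤ x) :
    (l.map (· - d)).map (· + d) = l := by
  rw [List.map_map]
  exact (List.map_congr_left fun x hx => Nat.sub_add_cancel (h x hx)).trans (List.map_id _)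

def glue (m : ℕ) : List (List ℕ) → List ℕ
  | [] => []
  | Q :: Qs => Q ++ (glue m Qs).map (· + (m * Q.length + 1))

theorem glue_cons (Q : List ℕ) (Qs : List (List ℕ)) :
    glue m (Q :: Qs) = Q ++ (glue m Qs).map (· + (m * Q.length + 1)) := rfl

theorem length_glue (Qs : List (List ℕ)) : (glue m Qs).length = (Qs.map List.length).sum := by
  induction Qs with
  | nil => rfl
  | cons Q Qs ih => simp [glue_cons, ih]

theorem pos_of_mem_glue {Qs : List (List ℕ)} (hQs : ∀ Q ∈ Qs, ∀ x ∈ Q, 1 ≤ x) :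
    ∀ x ∈ glue m Qs, 1 ≤ x := by
  induction Qs with
  | nil => simp [glue]
  | cons Q Qs ih =>
    simp only [glue_cons, List.mem_append, List.mem_map]
    rintro x (hx | ⟨y, -, rfl⟩)
    · exact hQs Q List.mem_cons_self x hx
    · omega

theorem isParking_glue {Qs : List (List ℕ)} (hQs : ∀ Q ∈ Qs, IsParking m 1 Q) :
    IsParking m Qs.length (glue m Qs) := by
  induction Qs with
  | nil => exact ⟨List.Pairwise.nil, by simp [glue], trivial⟩
  | cons Q Qs ih =>
    have hQ := hQs Q List.mem_cons_self
    have hS := ih fun R hR => hQs R (List.mem_cons_of_mem Q hR)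
    rw [glue_cons, List.length_cons]
    refine ⟨List.pairwise_append.mpr ⟨hQ.sorted, hS.sorted.map _ fun x y hxy => by omega,
      fun x hx y hy => ?_⟩, pos_of_mem_glue fun R hR => (hQs R hR).pos, ?_⟩
    · obtain ⟨z, hz, rfl⟩ := List.mem_map.mp hy
      have := hQ.underLine.le_of_mem hx
      have := hS.pos z hz
      omega
    · refine underLine_append.mpr ⟨hQ.underLine.mono (by omega), ?_⟩
      rw [show Qs.length + 1 + m * Q.length = Qs.length + (m * Q.length + 1) by ring]
      exact underLine_map_add.mpr hS.underLine

/-- The first-return decomposition `FRD` into `k + 1` pieces, one cut at a time: after each cut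
the remainder is shifted down to start again under the line `1 + m j`. -/
def parts (m : ℕ) : ℕ → List ℕ → List (List ℕ)
  | 0, t => [t]
  | k + 1, t =>
    t.take (underLineLength m 1 t) ::
      parts m k ((t.drop (underLineLength m 1 t)).map (· - (m * underLineLength m 1 t + 1)))

theorem parts_succ (k : ℕ) (t : List ℕ) :
    parts m (k + 1) t = t.take (underLineLength m 1 t) ::
      parts m k ((t.drop (underLineLength m 1 t)).map (· - (m * underLineLength m 1 t + 1))) :=
  rfl

theorem length_parts (k : ℕ) (t : List ℕ) : (parts m k t).length = k + 1 := by
  induction k generalizing t with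
  | zero => rfl
  | succ k ih => rw [parts_succ, List.length_cons, ih]

theorem sum_length_parts (k : ℕ) (t : List ℕ) :
    ((parts m k t).map List.length).sum = t.length := by
  induction k generalizing t with
  | zero => simp [parts]
  | succ k ih =>
    have := underLineLength_le_length (m := m) 1 t
    simp only [parts_succ, List.map_cons, List.sum_cons, ih, List.length_map, List.length_take,
      List.length_drop]
    omega

theorem length_le_of_mem_parts {k : ℕ} {t Q : List ℕ} (hQ : Q ∈ parts m k t) :
    Q.length ≤ t.length := by
  induction k generalizing t with
  | zero => rw [List.mem_singleton.mp hQ]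
  | succ k ih =>
    rcases List.mem_cons.mp hQ with rfl | hQ
    · exact List.length_take_le' _ _
    · exact (ih hQ).trans (by simp)

theorem isParking_take_underLineLength {b : ℕ} {t : List ℕ} (ht : IsParking m b t) :
    IsParking m 1 (t.take (underLineLength m 1 t)) where
  sorted := ht.sorted.sublist (List.take_sublist _ _)
  pos x hx := ht.pos x (List.mem_of_mem_take hx)
  underLine := underLine_take_underLineLength 1 t

theorem isParking_drop_underLineLength {k : ℕ} {t : List ℕ} (ht : IsParking m (k + 2) t) :
    IsParking m (k + 1)
      ((t.drop (underLineLength m 1 t)).map (· - (m * underLineLength m 1 t + 1))) := by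
  have hlarge : ∀ y ∈ t.drop (underLineLength m 1 t), m * underLineLength m 1 t + 1 < y :=
    fun y hy => by
      have := lt_of_mem_drop_underLineLength ht.sorted hy
      omega
  have hc := underLineLength_le_length (m := m) 1 t
  set c := underLineLength m 1 t
  refine ⟨(ht.sorted.sublist (List.drop_sublist _ _)).map _ fun x y hxy => by omega,
    fun x hx => ?_, ?_⟩
  · obtain ⟨y, hy, rfl⟩ := List.mem_map.mp hx
    have := hlarge y hy
    omega
  · have hunder := ht.underLine
    rw [← List.take_append_drop c t, underLine_append, List.length_take_of_le hc,
      ← map_sub_map_add fun y hy => (hlarge y hy).le] at hunder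
    refine underLine_map_add.mp (hunder.2.mono ?_)
    omega

theorem isParking_of_mem_parts {k : ℕ} {t Q : List ℕ} (ht : IsParking m (k + 1) t)
    (hQ : Q ∈ parts m k t) : IsParking m 1 Q := by
  induction k generalizing t with
  | zero => exact List.mem_singleton.mp hQ ▸ ht
  | succ k ih =>
    rcases List.mem_cons.mp hQ with rfl | hQ
    · exact isParking_take_underLineLength ht
    · exact ih (isParking_drop_underLineLength ht) hQ

theorem glue_parts {k : ℕ} {t : List ℕ} (ht : IsParking m (k + 1) t) :
    glue m (parts m k t) = t := by
  induction k generalizing t with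
  | zero => simp [parts, glue]
  | succ k ih =>
    have hc := underLineLength_le_length (m := m) 1 t
    rw [parts_succ, glue_cons, ih (isParking_drop_underLineLength ht), List.length_take_of_le hc,
      map_sub_map_add fun y hy => ?_, List.take_append_drop]
    have := lt_of_mem_drop_underLineLength ht.sorted hy
    omega

theorem parts_glue {k : ℕ} {Qs : List (List ℕ)} (hQs : ∀ Q ∈ Qs, IsParking m 1 Q)
    (hlen : Qs.length = k + 1) : parts m k (glue m Qs) = Qs := by
  induction k generalizing Qs with
  | zero =>
    obtain ⟨Q, rfl⟩ := List.length_eq_one_iff.mp hlen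
    simp [parts, glue]
  | succ k ih =>
    obtain ⟨Q, Qs, rfl⟩ := List.exists_cons_of_length_eq_add_one hlen
    have hQ := hQs Q List.mem_cons_self
    have hQs' : ∀ R ∈ Qs, IsParking m 1 R := fun R hR => hQs R (List.mem_cons_of_mem Q hR)
    have hcut : underLineLength m 1 (glue m (Q :: Qs)) = Q.length := by
      refine underLineLength_append hQ.underLine fun y hy => ?_
      obtain ⟨z, hz, rfl⟩ := List.mem_map.mp (List.mem_of_mem_head? hy)
      have := pos_of_mem_glue (fun R hR => (hQs' R hR).pos) z hz
      omega
    rw [parts_succ, hcut, glue_cons, List.take_left, List.drop_left]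
    simp only [List.map_map, Function.comp_def, Nat.add_sub_cancel, List.map_id']
    rw [ih hQs' (Nat.succ.inj hlen)]

def lineHits (m : ℕ) : ℕ → List ℕ → ℕ
  | _, [] => 0
  | c, x :: l => (if x = c then 1 else 0) + lineHits m (c + m) l

theorem lineHits_append (c : ℕ) (l l' : List ℕ) :
    lineHits m c (l ++ l') = lineHits m c l + lineHits m (c + m * l.length) l' := by
  induction l generalizing c with
  | nil => simp [lineHits]
  | cons x l ih =>
    simp only [List.cons_append, lineHits, ih, List.length_cons, Nat.mul_succ, Nat.add_assoc,
      Nat.add_comm m]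

theorem lineHits_map_add (c d : ℕ) (l : List ℕ) :
    lineHits m (c + d) (l.map (· + d)) = lineHits m c l := by
  induction l generalizing c with
  | nil => rfl
  | cons x l ih =>
    simp only [List.map_cons, lineHits, Nat.add_right_cancel_iff, Nat.add_right_comm c d m, ih]

theorem lineHits_eq_zero_of_underLine {b c : ℕ} {l : List ℕ} (hl : UnderLine m b l)
    (hbc : b < c) : lineHits m c l = 0 := by
  induction l generalizing b c with
  | nil => rfl
  | cons x l ih => rw [lineHits, if_neg (by have := hl.1; omega), ih hl.2 (by omega)]

theorem lineHits_glue_append_singleton {Qs : List (List ℕ)} (hQs : ∀ Q ∈ Qs, UnderLine m 1 Q)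
    (R : List ℕ) : lineHits m (Qs.length + 1) (glue m (Qs ++ [R])) = lineHits m 1 R := by
  induction Qs with
  | nil => simp [glue]
  | cons Q Qs ih =>
    rw [List.cons_append, glue_cons, lineHits_append,
      lineHits_eq_zero_of_underLine (hQs Q List.mem_cons_self) (by simp), List.length_cons,
      show Qs.length + 1 + 1 + m * Q.length = Qs.length + 1 + (m * Q.length + 1) by ring,
      lineHits_map_add, ih fun R hR => hQs R (List.mem_cons_of_mem Q hR), Nat.zero_add]

theorem count_one_glue_cons {Q : List ℕ} {Qs : List (List ℕ)}
    (hQs : ∀ R ∈ Qs, ∀ x ∈ R, 1 ≤ x) : (glue m (Q :: Qs)).count 1 = Q.count 1 := by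
  have hshift : ((glue m Qs).map (· + (m * Q.length + 1))).count 1 = 0 :=
    List.count_eq_zero.mpr fun h => by
      obtain ⟨z, hz, hz1⟩ := List.mem_map.mp h
      have := pos_of_mem_glue hQs z hz
      omega
  rw [glue_cons, List.count_append, hshift, Nat.add_zero]

def tau (m : ℕ) : List ℕ → List ℕ
  | [] => []
  | x :: t => x :: glue m ((parts m m t).reverse.attach.map fun Q => tau m Q.1)
termination_by l => l.length
decreasing_by
  have := length_le_of_mem_parts (List.mem_reverse.mp Q.2)
  simp only [List.length_cons]
  omega

theorem tau_nil : tau m [] = [] := by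
  rw [tau]

theorem tau_cons (x : ℕ) (t : List ℕ) :
    tau m (x :: t) = x :: glue m ((parts m m t).reverse.map (tau m)) := by
  rw [tau, List.attach_map_val]

theorem tau_induction {motive : List ℕ → Prop} (nil : motive [])
    (cons : ∀ x t, (∀ Q ∈ parts m m t, motive Q) → motive (x :: t)) : ∀ l, motive l
  | [] => nil
  | x :: t => cons x t fun Q _ => tau_induction nil cons Q
termination_by l => l.length
decreasing_by
  have := length_le_of_mem_parts ‹Q ∈ parts m m t›
  simp only [List.length_cons]
  omega

theorem length_tau (l : List ℕ) : (tau m l).length = l.length := by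
  induction l using tau_induction (m := m) with
  | nil => rw [tau_nil]
  | cons x t ih =>
    simp only [tau_cons, List.length_cons, length_glue, List.map_reverse, List.sum_reverse,
      List.map_map]
    rw [List.map_congr_left (f := List.length ∘ tau m) (g := List.length) ih, sum_length_parts]

theorem isParking_tau {l : List ℕ} (hl : IsParking m 1 l) : IsParking m 1 (tau m l) := by
  induction l using tau_induction (m := m) with
  | nil => rwa [tau_nil]
  | cons x t ih =>
    obtain ⟨rfl, ht⟩ := isParking_cons_iff.mp hl
    rw [tau_cons, isParking_cons_iff]
    refine ⟨rfl, ?_⟩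
    have := isParking_glue (m := m) (Qs := (parts m m t).reverse.map (tau m)) fun R hR => by
      obtain ⟨Q, hQ, rfl⟩ := List.mem_map.mp hR
      have hQ := List.mem_reverse.mp hQ
      exact ih Q hQ (isParking_of_mem_parts ht hQ)
    rwa [List.length_map, List.length_reverse, length_parts] at this

theorem tau_tau {l : List ℕ} (hl : IsParking m 1 l) : tau m (tau m l) = l := by
  induction l using tau_induction (m := m) with
  | nil => rw [tau_nil, tau_nil]
  | cons x t ih =>
    obtain ⟨rfl, ht⟩ := isParking_cons_iff.mp hl
    have hparts : ∀ Q ∈ parts m m t, IsParking m 1 Q := fun Q hQ => isParking_of_mem_parts ht hQ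
    rw [tau_cons, tau_cons, parts_glue (fun R hR => ?_) (by simp [length_parts]),
      ← List.map_reverse, List.reverse_reverse, List.map_map,
      List.map_congr_left (f := tau m ∘ tau m) (g := id) fun Q hQ => ih Q hQ (hparts Q hQ),
      List.map_id, glue_parts ht]
    obtain ⟨Q, hQ, rfl⟩ := List.mem_map.mp hR
    exact isParking_tau (hparts Q (List.mem_reverse.mp hQ))

theorem count_one_tau {l : List ℕ} (hl : IsParking m 1 l) :
    (tau m l).count 1 = lineHits m 1 l := by
  induction l using tau_induction (m := m) with
  | nil => rw [tau_nil]; rfl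
  | cons x t ih =>
    obtain ⟨rfl, ht⟩ := isParking_cons_iff.mp hl
    have hparts : ∀ Q ∈ parts m m t, IsParking m 1 Q := fun Q hQ => isParking_of_mem_parts ht hQ
    obtain ⟨Ps, R, hPR⟩ := (List.eq_nil_or_concat' (parts m m t)).resolve_left fun h => by
      simpa [h] using length_parts (m := m) m t
    have hPs : Ps.length = m := by simpa [hPR] using length_parts (m := m) m t
    have hR : R ∈ parts m m t := hPR ▸ List.mem_append_right Ps (List.mem_singleton_self R)
    have hPs_mem {Q} (hQ : Q ∈ Ps) : Q ∈ parts m m t := hPR ▸ List.mem_append_left [R] hQ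
    have hlucky : lineHits m (m + 1) t = lineHits m 1 R := by
      have := lineHits_glue_append_singleton (fun Q hQ => (hparts Q (hPs_mem hQ)).underLine) R
      rwa [hPs, ← hPR, glue_parts ht] at this
    rw [tau_cons, hPR, List.reverse_append, List.reverse_singleton, List.singleton_append,
      List.map_cons, List.count_cons_self, count_one_glue_cons, ih R hR (hparts R hR), ← hlucky,
      lineHits, if_pos rfl, Nat.add_comm 1 m, Nat.add_comm]
    intro S hS x hx
    obtain ⟨Q, hQ, rfl⟩ := List.mem_map.mp hS
    exact (isParking_tau (hparts Q (hPs_mem (List.mem_reverse.mp hQ)))).pos x hx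

theorem lineHits_tau {l : List ℕ} (hl : IsParking m 1 l) :
    lineHits m 1 (tau m l) = l.count 1 := by
  rw [← count_one_tau (isParking_tau hl), tau_tau hl]

theorem underLine_ofFn {b n : ℕ} {p : Fin n → ℕ} :
    UnderLine m b (List.ofFn p) ↔ ∀ i : Fin n, p i ≤ m * i + b := by
  induction n generalizing b with
  | zero => simp [UnderLine]
  | succ n ih =>
    simp only [List.ofFn_succ, UnderLine, ih, Fin.forall_fin_succ, Fin.val_zero, Fin.val_succ]
    constructor <;> rintro ⟨h0, h⟩ <;> refine ⟨by simpa using h0, fun i => ?_⟩ <;>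
      linarith [h i, Nat.mul_succ m i]

theorem isParking_ofFn_iff {n : ℕ} {p : Fin n → ℕ} :
    IsParking m 1 (List.ofFn p) ↔ p ∈ PK m n := by
  rw [PK, BSeq, Set.Finite.mem_toFinset, Set.mem_ofPred_eq, ← List.sortedLE_ofFn_iff,
    List.sortedLE_iff_pairwise, forall_and]
  simp only [← underLine_ofFn, List.forall_mem_ofFn_iff.symm]
  exact ⟨fun ⟨hs, hpos, hunder⟩ => ⟨hs, hpos, hunder⟩,
    fun ⟨hs, hpos, hunder⟩ => ⟨hs, hpos, hunder⟩⟩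

theorem lineHits_ofFn {n : ℕ} (c : ℕ) (p : Fin n → ℕ) :
    lineHits m c (List.ofFn p) = #{i | p i = m * i + c} := by
  induction n generalizing c with
  | zero => rfl
  | succ n ih =>
    rw [List.ofFn_succ, lineHits, ih, card_filter, card_filter, Fin.sum_univ_succ]
    simp only [Fin.val_zero, Nat.mul_zero, Nat.zero_add, Fin.val_succ, Nat.mul_succ,
      Nat.add_right_comm _ m c, Nat.add_assoc]

theorem count_ofFn {n : ℕ} (a : ℕ) (p : Fin n → ℕ) : (List.ofFn p).count a = freq a p := by
  induction n with
  | zero => rfl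
  | succ n ih =>
    rw [List.ofFn_succ, List.count_cons, ih, freq, freq, card_filter, card_filter,
      Fin.sum_univ_succ, Nat.add_comm]
    simp

theorem ofFn_getD_eq {n : ℕ} {l : List ℕ} (hl : l.length = n) :
    List.ofFn (fun i : Fin n => l.getD i 0) = l :=
  List.ext_getElem (by simp [hl]) fun i _ h => by simp [List.getElem?_eq_getElem h]

end ParkingInvolution

open ParkingInvolution

theorem stmt6_general (m : ℕ) (n : ℕ) :
    ∃ τ : {p // p ∈ PK m n} → {p // p ∈ PK m n},
      (∀ p, τ (τ p) = p) ∧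
      (∀ p : {p // p ∈ PK m n},
        luck m p.1 = freq 1 (τ p).1 ∧ freq 1 p.1 = luck m (τ p).1) := by
  let tauFin (p : Fin n → ℕ) : Fin n → ℕ := fun i => (tau m (List.ofFn p)).getD i 0
  have ofFn_tauFin (p : Fin n → ℕ) : List.ofFn (tauFin p) = tau m (List.ofFn p) :=
    ofFn_getD_eq (by rw [length_tau, List.length_ofFn])
  have tauFin_mem {p} (hp : p ∈ PK m n) : tauFin p ∈ PK m n := by
    rw [← isParking_ofFn_iff, ofFn_tauFin]
    exact isParking_tau (isParking_ofFn_iff.mpr hp)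
  refine ⟨fun p => ⟨tauFin p.1, tauFin_mem p.2⟩, fun ⟨p, hp⟩ => ?_, fun ⟨p, hp⟩ => ?_⟩
  · refine Subtype.ext (List.ofFn_injective ?_)
    rw [ofFn_tauFin, ofFn_tauFin, tau_tau (isParking_ofFn_iff.mpr hp)]
  · have hl := isParking_ofFn_iff.mpr hp
    constructor
    · rw [← count_ofFn, ofFn_tauFin, count_one_tau hl]
      exact (lineHits_ofFn 1 p).symm
    · rw [← count_ofFn, ← lineHits_tau hl, ← ofFn_tauFin]
      exact lineHits_ofFn 1 _

theorem stmt6 (m : ℕ) (hm : 1 ≤ m) (n : ℕ) :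
    ∃ τ : {p // p ∈ PK m n} → {p // p ∈ PK m n},
      (∀ p, τ (τ p) = p) ∧
      (∀ p : {p // p ∈ PK m n},
        luck m p.1 = freq 1 (τ p).1 ∧ freq 1 p.1 = luck m (τ p).1) :=
  stmt6_general m n

end
end

section
/- For every n ≥ 1, the first-return decomposition p ↦ (P_1, …, P_{m+1}) is a bijection from PK(n) onto the set of (m+1)-tuples (Q_1, …, Q_{m+1}) of u-parking distributions whose lengths sum to n−1. -/
/-!
Inside the `ℓ`-th part (positions `i_ℓ ≤ k < i_{ℓ+1}`) the fixed-point conditions give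
`p_k ≤ m (k - 2) + ℓ + 1`, with equality at `k = i_ℓ`, so `P_ℓ` is `p` on that range shifted
down by `m (i_ℓ - 2) + ℓ` and is again a u-parking distribution. Conversely, put a `1` in front
of parts `Q_ℓ`, the `ℓ`-th one shifted up by `m (s_ℓ - 2) + ℓ` where `s_ℓ` is its starting
position. The result is a u-parking distribution whose first fixed points are exactly the `s_ℓ`,
so this gluing is a two-sided inverse of the decomposition.
-/

open scoped Classical
open Finset

noncomputable section

section Distribution

variable {m n : ℕ} {p : Fin n → ℕ}

lemma mem_PK : p ∈ PK m n ↔ Monotone p ∧ ∀ i : Fin n, 1 ≤ p i ∧ p i ≤ m * i + 1 := by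
  simp [PK, BSeq]

lemma pget_add_one (i : Fin n) : pget p (i + 1) = p i := by
  simp [pget]

lemma pget_bounds_of_mem_PK (hp : p ∈ PK m n) {k : ℕ} (h1 : 1 ≤ k) (hkn : k ≤ n) :
    1 ≤ pget p k ∧ pget p k ≤ m * (k - 1) + 1 := by
  obtain ⟨i, rfl⟩ : ∃ i : Fin n, k = i + 1 := ⟨⟨k - 1, by omega⟩, by simp; omega⟩
  simpa [pget_add_one] using (mem_PK.1 hp).2 i

lemma pget_mono_of_mem_PK (hp : p ∈ PK m n) {k k' : ℕ} (h1 : 1 ≤ k) (hk : k ≤ k')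
    (hk'n : k' ≤ n) : pget p k ≤ pget p k' := by
  obtain ⟨i, rfl⟩ : ∃ i : Fin n, k = i + 1 := ⟨⟨k - 1, by omega⟩, by simp; omega⟩
  obtain ⟨i', rfl⟩ : ∃ i' : Fin n, k' = i' + 1 := ⟨⟨k' - 1, by omega⟩, by simp; omega⟩
  simpa [pget_add_one] using (mem_PK.1 hp).1 (show i ≤ i' by omega)

lemma ffix_eq_sInf (ℓ : ℕ) :
    ffix m p ℓ = sInf ({k | 2 ≤ k ∧ k ≤ n ∧ m * (k - 2) + 1 + ℓ ≤ pget p k} ∪ {n + 1}) := by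
  rw [ffix]
  congr 2
  ext k
  constructor
  · rintro ⟨h2, i, rfl, hi⟩
    exact ⟨h2, i.isLt, by rwa [pget_add_one]⟩
  · rintro ⟨h2, hkn, hk⟩
    refine ⟨h2, ⟨k - 1, by omega⟩, by simp; omega, ?_⟩
    simpa [pget, show k - 1 < n by omega] using hk

lemma ffix_le (ℓ : ℕ) : ffix m p ℓ ≤ n + 1 := by
  rw [ffix_eq_sInf]
  exact Nat.sInf_le (Or.inr rfl)

lemma two_le_ffix (hn : 1 ≤ n) (ℓ : ℕ) : 2 ≤ ffix m p ℓ := by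
  rw [ffix_eq_sInf]
  rcases Nat.sInf_mem (⟨n + 1, Or.inr rfl⟩ : Set.Nonempty
    ({k | 2 ≤ k ∧ k ≤ n ∧ m * (k - 2) + 1 + ℓ ≤ pget p k} ∪ {n + 1})) with h | h
  · exact h.1
  · rw [Set.mem_singleton_iff.1 h]; omega

lemma ffix_mono {ℓ ℓ' : ℕ} (h : ℓ ≤ ℓ') : ffix m p ℓ ≤ ffix m p ℓ' := by
  simp only [ffix_eq_sInf]
  apply le_csInf ⟨n + 1, Or.inr rfl⟩
  rintro k (⟨h2, hkn, hk⟩ | hk)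
  · exact Nat.sInf_le (Or.inl ⟨h2, hkn, by omega⟩)
  · exact Nat.sInf_le (Or.inr hk)

lemma pget_lt_of_lt_ffix {k ℓ : ℕ} (h2 : 2 ≤ k) (hk : k < ffix m p ℓ) :
    pget p k < m * (k - 2) + 1 + ℓ := by
  by_cases hkn : k ≤ n
  · rw [ffix_eq_sInf] at hk
    have := Nat.notMem_of_lt_sInf hk
    simp only [Set.mem_union, Set.mem_ofPred_eq, Set.mem_singleton_iff, not_or] at this
    omega
  · simp [pget, show ¬ k - 1 < n by omega]

lemma le_pget_ffix {ℓ : ℕ} (h : ffix m p ℓ ≤ n) :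
    m * (ffix m p ℓ - 2) + 1 + ℓ ≤ pget p (ffix m p ℓ) := by
  rw [ffix_eq_sInf] at h ⊢
  rcases Nat.sInf_mem (⟨n + 1, Or.inr rfl⟩ : Set.Nonempty
    ({k | 2 ≤ k ∧ k ≤ n ∧ m * (k - 2) + 1 + ℓ ≤ pget p k} ∪ {n + 1})) with hk | hk
  · exact hk.2.2
  · rw [Set.mem_singleton_iff.1 hk] at h; omega

lemma ffix_eq_of {s ℓ : ℕ} (hs2 : 2 ≤ s) (hsn : s ≤ n + 1)
    (hbelow : ∀ k, 2 ≤ k → k < s → pget p k < m * (k - 2) + 1 + ℓ)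
    (hat : s ≤ n → m * (s - 2) + 1 + ℓ ≤ pget p s) : ffix m p ℓ = s := by
  rw [ffix_eq_sInf]
  apply le_antisymm
  · rcases eq_or_lt_of_le hsn with rfl | hlt
    · exact Nat.sInf_le (Or.inr rfl)
    · exact Nat.sInf_le (Or.inl ⟨hs2, by omega, hat (by omega)⟩)
  · apply le_csInf ⟨n + 1, Or.inr rfl⟩
    rintro k (⟨h2, -, hk⟩ | rfl)
    · by_contra! hks
      exact absurd hk (not_le.2 (hbelow k h2 hks))
    · exact hsn

end Distribution

section FirstReturn

variable {m n : ℕ} {p : Fin n → ℕ}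

@[simp] lemma ffixE_zero : ffixE m p 0 = 2 := rfl

@[simp] lemma ffixE_top : ffixE m p (m + 1) = n + 1 := by
  simp [ffixE]

lemma ffixE_of_pos_of_le {j : ℕ} (h1 : 1 ≤ j) (h2 : j ≤ m) : ffixE m p j = ffix m p j := by
  rw [ffixE, if_neg (by omega), if_neg (by omega)]

lemma two_le_ffixE (hn : 1 ≤ n) (j : ℕ) : 2 ≤ ffixE m p j := by
  unfold ffixE
  split_ifs
  · rfl
  · omega
  · exact two_le_ffix hn j

lemma ffixE_le (hn : 1 ≤ n) (j : ℕ) : ffixE m p j ≤ n + 1 := by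
  unfold ffixE
  split_ifs
  · omega
  · rfl
  · exact ffix_le j

lemma ffixE_mono (hn : 1 ≤ n) {j j' : ℕ} (h : j ≤ j') (h' : j' ≤ m + 1) :
    ffixE m p j ≤ ffixE m p j' := by
  rcases Nat.eq_zero_or_pos j with rfl | hj
  · exact two_le_ffixE hn j'
  rcases eq_or_lt_of_le h' with rfl | hj'
  · rw [ffixE_top]; exact ffixE_le hn j
  rw [ffixE_of_pos_of_le hj (by omega), ffixE_of_pos_of_le (by omega) (by omega)]
  exact ffix_mono h

lemma pget_le_of_lt_ffixE (hp : p ∈ PK m n) {ℓ k : ℕ} (hℓ : ℓ ≤ m) (h2 : 2 ≤ k)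
    (hk : k < ffixE m p (ℓ + 1)) : pget p k ≤ m * (k - 2) + ℓ + 1 := by
  rcases eq_or_lt_of_le hℓ with hℓm | hℓm
  · rw [hℓm, ffixE_top] at hk
    have := (pget_bounds_of_mem_PK hp (k := k) (by omega) (by omega)).2
    have : m * (k - 1) = m * (k - 2) + ℓ := by
      rw [show k - 1 = k - 2 + 1 by omega, Nat.mul_succ, hℓm]
    omega
  · rw [ffixE_of_pos_of_le (by omega) (by omega)] at hk
    have := pget_lt_of_lt_ffix h2 hk
    omega

lemma pget_ffixE (hp : p ∈ PK m n) (hn : 1 ≤ n) {ℓ : ℕ} (hℓ : ℓ ≤ m)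
    (hne : ffixE m p ℓ < ffixE m p (ℓ + 1)) :
    pget p (ffixE m p ℓ) = m * (ffixE m p ℓ - 2) + ℓ + 1 := by
  have hkn : ffixE m p ℓ ≤ n := by have := ffixE_le (m := m) (p := p) hn (ℓ + 1); omega
  have hub := pget_le_of_lt_ffixE hp hℓ (two_le_ffixE hn ℓ) hne
  rcases Nat.eq_zero_or_pos ℓ with rfl | hℓ1
  · have := (pget_bounds_of_mem_PK hp (k := 2) (by omega) hkn).1
    simp only [ffixE_zero] at hub ⊢
    omega
  · rw [ffixE_of_pos_of_le hℓ1 hℓ] at hkn hub ⊢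
    have := le_pget_ffix hkn
    omega

lemma length_FRD (ℓ : ℕ) : (FRD m p ℓ).length = ffixE m p (ℓ + 1) - ffixE m p ℓ := by
  simp [FRD]

lemma FRD_get_add (hp : p ∈ PK m n) (hn : 1 ≤ n) {ℓ : ℕ} (hℓ : ℓ ≤ m)
    (t : Fin (FRD m p ℓ).length) :
    (FRD m p ℓ).get t + m * (ffixE m p ℓ - 2) + ℓ = pget p (ffixE m p ℓ + t) := by
  obtain ⟨t, ht⟩ := t
  have hlen := length_FRD (m := m) (p := p) ℓ
  have hstart := pget_ffixE hp hn hℓ (by omega)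
  have := pget_mono_of_mem_PK hp (k := ffixE m p ℓ) (k' := ffixE m p ℓ + t)
    (by have := two_le_ffixE (m := m) (p := p) hn ℓ; omega) (by omega)
    (by have := ffixE_le (m := m) (p := p) hn (ℓ + 1); omega)
  simp only [FRD, List.get_eq_getElem, List.getElem_map, List.getElem_range]
  omega

lemma isPKlist_FRD (hp : p ∈ PK m n) (hn : 1 ≤ n) {ℓ : ℕ} (hℓ : ℓ ≤ m) :
    isPKlist m (FRD m p ℓ) := by
  have hlen := length_FRD (m := m) (p := p) ℓ
  have h2 := two_le_ffixE (m := m) (p := p) hn ℓ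
  have hle := ffixE_le (m := m) (p := p) hn (ℓ + 1)
  refine ⟨List.pairwise_iff_get.2 fun i j hij => ?_, fun i => ?_⟩
  · have := FRD_get_add hp hn hℓ i
    have := FRD_get_add hp hn hℓ j
    have := pget_mono_of_mem_PK hp (k := ffixE m p ℓ + i) (k' := ffixE m p ℓ + j)
      (by omega) (by simp only [Fin.lt_def] at hij; omega) (by omega)
    omega
  · have hi := i.isLt
    have hget := FRD_get_add hp hn hℓ i
    have hstart := pget_ffixE hp hn hℓ (by omega)
    have := pget_mono_of_mem_PK hp (k := ffixE m p ℓ) (k' := ffixE m p ℓ + i)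
      (by omega) (by omega) (by omega)
    have hub := pget_le_of_lt_ffixE hp hℓ (k := ffixE m p ℓ + i) (by omega) (by omega)
    have : m * (ffixE m p ℓ + i - 2) = m * (ffixE m p ℓ - 2) + m * i := by
      rw [← Nat.mul_add]; congr 1; omega
    exact ⟨by omega, by omega⟩

end FirstReturn

lemma Nat.exists_le_lt_succ (S : ℕ → ℕ) {k N : ℕ} (h0 : S 0 ≤ k) (hN : k < S N) :
    ∃ j < N, S j ≤ k ∧ k < S (j + 1) := by
  induction N with
  | zero => omega
  | succ N ih =>
    by_cases hk : k < S N
    · obtain ⟨j, hj, hjk⟩ := ih hk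
      exact ⟨j, by omega, hjk⟩
    · exact ⟨N, by omega, by omega, hN⟩

section Gluing

variable {m n : ℕ} (Q : Fin (m + 1) → List ℕ)

def partAt (j : ℕ) : List ℕ := if h : j < m + 1 then Q ⟨j, h⟩ else []

def blockStart (j : ℕ) : ℕ := 2 + ∑ t ∈ range j, (partAt Q t).length

-- Entry `i` sits at position `i + 1`, as in `pget`; `findGreatest` finds the part containing it.
def glue (m n : ℕ) (Q : Fin (m + 1) → List ℕ) : Fin n → ℕ := fun i =>
  if (i : ℕ) = 0 then 1 else
    let ℓ := Nat.findGreatest (fun j => blockStart Q j ≤ i + 1) m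
    (partAt Q ℓ).getD (i + 1 - blockStart Q ℓ) 0 + m * (blockStart Q ℓ - 2) + ℓ

def IsGluing (m : ℕ) {n : ℕ} (Q : Fin (m + 1) → List ℕ) (p : Fin n → ℕ) : Prop :=
  pget p 1 = 1 ∧ ∀ (ℓ : Fin (m + 1)) (t : Fin (Q ℓ).length),
    pget p (blockStart Q ℓ + t) = (Q ℓ).get t + m * (blockStart Q ℓ - 2) + ℓ

@[simp] lemma partAt_val (ℓ : Fin (m + 1)) : partAt Q ℓ = Q ℓ := by
  rw [partAt, dif_pos ℓ.isLt]

@[simp] lemma blockStart_zero : blockStart Q 0 = 2 := by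
  simp [blockStart]

lemma blockStart_succ (ℓ : Fin (m + 1)) :
    blockStart Q ((ℓ : ℕ) + 1) = blockStart Q ℓ + (Q ℓ).length := by
  simp [blockStart, sum_range_succ, Nat.add_assoc]

lemma blockStart_top : blockStart Q (m + 1) = 2 + ∑ ℓ : Fin (m + 1), (Q ℓ).length := by
  simp [blockStart, ← Fin.sum_univ_eq_sum_range (fun t => (partAt Q t).length)]

lemma blockStart_mono : Monotone (blockStart Q) := fun _ _ h =>
  Nat.add_le_add_left (sum_le_sum_of_subset (range_subset_range.2 h)) 2

lemma two_le_blockStart (j : ℕ) : 2 ≤ blockStart Q j := Nat.le_add_right 2 _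

variable {Q}

lemma lt_of_blockStart_le_of_lt {i j k : ℕ} (h1 : blockStart Q i ≤ k)
    (h2 : k < blockStart Q j) : i < j := by
  by_contra! h
  have := blockStart_mono Q h
  omega

lemma exists_mem_block (hs : ∑ ℓ : Fin (m + 1), (Q ℓ).length = n - 1) (hn : 1 ≤ n) {k : ℕ}
    (h2 : 2 ≤ k) (hkn : k ≤ n) :
    ∃ ℓ : Fin (m + 1), blockStart Q ℓ ≤ k ∧ k < blockStart Q ((ℓ : ℕ) + 1) := by
  have htop := blockStart_top Q
  obtain ⟨j, hj, hjk⟩ := Nat.exists_le_lt_succ (blockStart Q) (k := k) (N := m + 1)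
    (by rwa [blockStart_zero]) (by omega)
  exact ⟨⟨j, hj⟩, hjk⟩

lemma findGreatest_blockStart {ℓ : Fin (m + 1)} {k : ℕ} (h1 : blockStart Q ℓ ≤ k)
    (h2 : k < blockStart Q ((ℓ : ℕ) + 1)) :
    Nat.findGreatest (fun j => blockStart Q j ≤ k) m = ℓ := by
  refine Nat.findGreatest_eq_iff.2 ⟨by omega, fun _ => h1, fun j hj _ hjk => ?_⟩
  have := lt_of_blockStart_le_of_lt hjk h2
  omega

lemma isGluing_glue (hs : ∑ ℓ : Fin (m + 1), (Q ℓ).length = n - 1) (hn : 1 ≤ n) :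
    IsGluing m Q (glue m n Q) := by
  refine ⟨by simp [pget, glue]; omega, fun ℓ t => ?_⟩
  have hlen := blockStart_succ Q ℓ
  have htop := blockStart_top Q
  have hle := blockStart_mono Q (show (ℓ : ℕ) + 1 ≤ m + 1 by omega)
  have h2 := two_le_blockStart Q ℓ
  have ht := t.isLt
  have hk : blockStart Q ℓ + t - 1 < n := by omega
  have hk0 : blockStart Q ℓ + t - 1 ≠ 0 := by omega
  have hk1 : blockStart Q ℓ + t - 1 + 1 = blockStart Q ℓ + t := by omega
  have hblock := findGreatest_blockStart (Q := Q) (ℓ := ℓ) (k := blockStart Q ℓ + t)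
    (by omega) (by omega)
  simp only [pget, dif_pos hk, glue, if_neg hk0, hk1, hblock, partAt_val, Nat.add_sub_cancel_left,
    List.getD_eq_getElem _ _ ht, List.get_eq_getElem]

end Gluing

namespace IsGluing

variable {m n : ℕ} {Q : Fin (m + 1) → List ℕ} {p : Fin n → ℕ}

lemma pget_eq_of_mem_block (h : IsGluing m Q p) {ℓ : Fin (m + 1)} {k : ℕ}
    (h1 : blockStart Q ℓ ≤ k) (h2 : k < blockStart Q ((ℓ : ℕ) + 1)) :
    pget p k = (Q ℓ).getD (k - blockStart Q ℓ) 0 + m * (blockStart Q ℓ - 2) + ℓ := by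
  have hlen := blockStart_succ Q ℓ
  have ht : k - blockStart Q ℓ < (Q ℓ).length := by omega
  have := h.2 ℓ ⟨k - blockStart Q ℓ, ht⟩
  rwa [show blockStart Q ℓ + (k - blockStart Q ℓ) = k by omega, List.get_eq_getElem,
    ← List.getD_eq_getElem _ 0 ht] at this

lemma pget_bounds (hQ : ∀ ℓ, isPKlist m (Q ℓ)) (h : IsGluing m Q p) {ℓ : Fin (m + 1)} {k : ℕ}
    (h1 : blockStart Q ℓ ≤ k) (h2 : k < blockStart Q ((ℓ : ℕ) + 1)) :
    m * (blockStart Q ℓ - 2) + ℓ + 1 ≤ pget p k ∧ pget p k ≤ m * (k - 2) + ℓ + 1 := by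
  have hlen := blockStart_succ Q ℓ
  have hS := two_le_blockStart Q ℓ
  have ht : k - blockStart Q ℓ < (Q ℓ).length := by omega
  have hk := h.pget_eq_of_mem_block h1 h2
  obtain ⟨hlo, hhi⟩ := (hQ ℓ).2 ⟨k - blockStart Q ℓ, ht⟩
  rw [List.getD_eq_getElem _ 0 ht] at hk
  have : m * (k - 2) = m * (blockStart Q ℓ - 2) + m * (k - blockStart Q ℓ) := by
    rw [← Nat.mul_add]; congr 1; omega
  simp only [List.get_eq_getElem] at hlo hhi
  omega

lemma pget_le_of_mem_block (hQ : ∀ ℓ, isPKlist m (Q ℓ)) (h : IsGluing m Q p) {ℓ : Fin (m + 1)}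
    {k k' : ℕ} (hℓk : blockStart Q ℓ ≤ k) (hkk' : k ≤ k') (hk'ℓ : k' < blockStart Q ((ℓ : ℕ) + 1)) :
    pget p k ≤ pget p k' := by
  have hlen := blockStart_succ Q ℓ
  have ht : k - blockStart Q ℓ < (Q ℓ).length := by omega
  have ht' : k' - blockStart Q ℓ < (Q ℓ).length := by omega
  have hle := (hQ ℓ).1.rel_get_of_le (a := ⟨_, ht⟩) (b := ⟨_, ht'⟩)
    (by simp only [Fin.mk_le_mk]; omega)
  rw [h.pget_eq_of_mem_block hℓk (by omega), h.pget_eq_of_mem_block (by omega) hk'ℓ,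
    List.getD_eq_getElem _ 0 ht, List.getD_eq_getElem _ 0 ht']
  simp only [List.get_eq_getElem] at hle
  omega

lemma pget_mono (hQ : ∀ ℓ, isPKlist m (Q ℓ)) (hs : ∑ ℓ : Fin (m + 1), (Q ℓ).length = n - 1)
    (hn : 1 ≤ n) (h : IsGluing m Q p) {k k' : ℕ} (hk1 : 1 ≤ k) (hkk' : k ≤ k') (hk'n : k' ≤ n) :
    pget p k ≤ pget p k' := by
  rcases eq_or_lt_of_le hkk' with rfl | hlt
  · rfl
  obtain ⟨ℓ', hℓ'k', hk'ℓ'⟩ := exists_mem_block hs hn (k := k') (by omega) hk'n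
  have hlo' := (h.pget_bounds hQ hℓ'k' hk'ℓ').1
  rcases eq_or_lt_of_le hk1 with rfl | hk2
  · have := h.1
    omega
  obtain ⟨ℓ, hℓk, hkℓ⟩ := exists_mem_block hs hn hk2 (by omega)
  have hℓℓ' : ℓ < (ℓ' : ℕ) + 1 := lt_of_blockStart_le_of_lt hℓk (hlt.trans hk'ℓ')
  rcases eq_or_lt_of_le (Nat.lt_succ_iff.1 hℓℓ') with hℓℓ' | hℓℓ'
  · obtain rfl : ℓ = ℓ' := Fin.ext hℓℓ'
    exact h.pget_le_of_mem_block hQ hℓk hlt.le hk'ℓ'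
  · have hhi := (h.pget_bounds hQ hℓk hkℓ).2
    have := blockStart_mono Q (show (ℓ : ℕ) + 1 ≤ ℓ' by omega)
    have : m * (k - 2) ≤ m * (blockStart Q ℓ' - 2) := Nat.mul_le_mul_left m (by omega)
    omega

lemma mem_PK (hQ : ∀ ℓ, isPKlist m (Q ℓ)) (hs : ∑ ℓ : Fin (m + 1), (Q ℓ).length = n - 1)
    (hn : 1 ≤ n) (h : IsGluing m Q p) : p ∈ PK m n := by
  refine _root_.mem_PK.2 ⟨fun i i' hii' => ?_, fun i => ?_⟩
  · simpa only [pget_add_one] using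
      h.pget_mono hQ hs hn (k := i + 1) (k' := i' + 1) (by omega) (by simpa using hii') i'.isLt
  · rw [← pget_add_one (p := p) i]
    rcases Nat.eq_zero_or_pos i with hi | hi
    · simp [hi, h.1]
    obtain ⟨ℓ, h1, h2⟩ := exists_mem_block hs hn (k := i + 1) (by omega) i.isLt
    have := h.pget_bounds hQ h1 h2
    have : m * (i + 1 - 2) + m = m * i := by
      rw [← Nat.mul_succ]; congr 1; omega
    have := ℓ.isLt
    omega

lemma ffixE_eq (hQ : ∀ ℓ, isPKlist m (Q ℓ)) (hs : ∑ ℓ : Fin (m + 1), (Q ℓ).length = n - 1)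
    (hn : 1 ≤ n) (h : IsGluing m Q p) {j : ℕ} (hj : j ≤ m + 1) :
    ffixE m p j = blockStart Q j := by
  have htop := blockStart_top Q
  rcases Nat.eq_zero_or_pos j with rfl | hj1
  · simp
  rcases eq_or_lt_of_le hj with rfl | hjm
  · rw [ffixE_top]; omega
  rw [ffixE_of_pos_of_le hj1 (by omega)]
  have := blockStart_mono Q hj
  refine ffix_eq_of (two_le_blockStart Q j) (by omega) (fun k h2 hk => ?_) (fun hjn => ?_)
  · obtain ⟨ℓ, h1, h2'⟩ := exists_mem_block hs hn h2 (by omega)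
    have := lt_of_blockStart_le_of_lt h1 hk
    have := (h.pget_bounds hQ h1 h2').2
    omega
  · obtain ⟨ℓ, h1, h2'⟩ := exists_mem_block hs hn (two_le_blockStart Q j) hjn
    have hjℓ : j ≤ ℓ := Nat.lt_succ_iff.1 (lt_of_blockStart_le_of_lt le_rfl h2')
    have hSℓ : blockStart Q ℓ = blockStart Q j := le_antisymm h1 (blockStart_mono Q hjℓ)
    have := (h.pget_bounds hQ h1 h2').1
    rw [hSℓ] at this
    omega

lemma FRD_eq (hQ : ∀ ℓ, isPKlist m (Q ℓ)) (hs : ∑ ℓ : Fin (m + 1), (Q ℓ).length = n - 1)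
    (hn : 1 ≤ n) (h : IsGluing m Q p) (ℓ : Fin (m + 1)) : FRD m p ℓ = Q ℓ := by
  have hS := h.ffixE_eq hQ hs hn (j := ℓ) (by omega)
  have hS' := h.ffixE_eq hQ hs hn (j := ℓ + 1) (by omega)
  have hlen := blockStart_succ Q ℓ
  apply List.ext_getElem
  · rw [length_FRD, hS, hS']; omega
  intro t _ ht'
  have hQ0 : 0 < (Q ℓ).length := by omega
  have hfirst := (hQ ℓ).2 ⟨0, hQ0⟩
  have h0 := h.2 ℓ ⟨0, hQ0⟩
  have ht := h.2 ℓ ⟨t, ht'⟩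
  simp only [List.get_eq_getElem, Nat.mul_zero, Nat.zero_add, Nat.add_zero] at hfirst h0 ht
  simp only [FRD, List.getElem_map, List.getElem_range, hS, h0, ht]
  omega

lemma unique (hs : ∑ ℓ : Fin (m + 1), (Q ℓ).length = n - 1) (hn : 1 ≤ n) {p' : Fin n → ℕ}
    (h : IsGluing m Q p) (h' : IsGluing m Q p') : p = p' := by
  funext i
  rw [← pget_add_one (p := p) i, ← pget_add_one (p := p') i]
  rcases Nat.eq_zero_or_pos i with hi | hi
  · rw [hi, h.1, h'.1]
  obtain ⟨ℓ, h1, h2⟩ := exists_mem_block hs hn (k := i + 1) (by omega) i.isLt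
  rw [h.pget_eq_of_mem_block h1 h2, h'.pget_eq_of_mem_block h1 h2]

end IsGluing

section Decomposition

variable {m n : ℕ} {p : Fin n → ℕ}

lemma blockStart_FRD (hn : 1 ≤ n) {j : ℕ} (hj : j ≤ m + 1) :
    blockStart (fun ℓ : Fin (m + 1) => FRD m p ℓ) j = ffixE m p j := by
  induction j with
  | zero => simp
  | succ j ih =>
    have hsucc := blockStart_succ (fun ℓ : Fin (m + 1) => FRD m p ℓ) ⟨j, by omega⟩
    dsimp only at hsucc
    rw [hsucc, ih (by omega), length_FRD]
    have := ffixE_mono (m := m) (p := p) hn (Nat.le_add_right j 1) hj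
    omega

lemma sum_length_FRD (hn : 1 ≤ n) : ∑ ℓ : Fin (m + 1), (FRD m p ℓ).length = n - 1 := by
  have := blockStart_top (fun ℓ : Fin (m + 1) => FRD m p ℓ)
  rw [blockStart_FRD hn le_rfl, ffixE_top] at this
  omega

lemma isGluing_FRD (hp : p ∈ PK m n) (hn : 1 ≤ n) :
    IsGluing m (fun ℓ : Fin (m + 1) => FRD m p ℓ) p := by
  refine ⟨?_, fun ℓ t => ?_⟩
  · have := pget_bounds_of_mem_PK hp le_rfl hn
    omega
  · rw [blockStart_FRD hn (by omega)]
    exact (FRD_get_add hp hn (by omega) t).symm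

end Decomposition

theorem stmt7_general (m : ℕ) (n : ℕ) (hn : 1 ≤ n) :
    Set.BijOn (fun (p : Fin n → ℕ) (ℓ : Fin (m + 1)) => FRD m p (ℓ : ℕ))
      (↑(PK m n))
      {Q : Fin (m + 1) → List ℕ |
        (∀ ℓ, isPKlist m (Q ℓ)) ∧ ∑ ℓ : Fin (m + 1), (Q ℓ).length = n - 1} := by
  refine Set.InvOn.bijOn (f' := glue m n) ⟨fun p hp => ?_, fun Q hQ => ?_⟩
    (fun p hp => ?_) (fun Q hQ => ?_)
  · exact (isGluing_glue (sum_length_FRD hn) hn).unique (sum_length_FRD hn) hn (isGluing_FRD hp hn)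
  · funext ℓ
    exact (isGluing_glue hQ.2 hn).FRD_eq hQ.1 hQ.2 hn ℓ
  · exact ⟨fun ℓ => isPKlist_FRD hp hn (by omega), sum_length_FRD hn⟩
  · exact (isGluing_glue hQ.2 hn).mem_PK hQ.1 hQ.2 hn

theorem stmt7 (m : ℕ) (hm : 1 ≤ m) (n : ℕ) (hn : 1 ≤ n) :
    Set.BijOn (fun (p : Fin n → ℕ) (ℓ : Fin (m + 1)) => FRD m p (ℓ : ℕ))
      (↑(PK m n))
      {Q : Fin (m + 1) → List ℕ |
        (∀ ℓ, isPKlist m (Q ℓ)) ∧ ∑ ℓ : Fin (m + 1), (Q ℓ).length = n - 1} :=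
  stmt7_general m n hn

end
end
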